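/- arXiv:1405.0780 — 14 statements merged into one kernel-verified Lean document; each statement's English description precedes it below -/
import Mathlib

section
/- If z₀ ∈ ℂ satisfies Re(z₀) > 0, or Re(z₀) = 0 and Im(z₀) ≥ 0, then L_p(z₀) = 1; otherwise L_p(z₀) = -1, where L_p is the Laguerre iteration function for p(z) = z² - 1. In particular, Laguerre's method applied to z² - 1 converges in one iteration from any nonzero complex starting point. -/
/-! For `n = 2` the principal square root of `z²` is `±z`, the sign being `+` exactly on the
half-plane `-π/2 < arg z ≤ π/2`. Substituting `±z` for the square root, the Laguerre step
collapses to `(1 + z) / (z + 1) = 1`, respectively `(z - 1) / (1 - z) = -1`. -/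

open Complex Real Filter

/-- Laguerre iteration function for `p_n(z) = z^n - 1`, using the principal square root. -/
noncomputable def Lp (n : ℕ) (z : ℂ) : ℂ :=
  z * (((z ^ n) ^ ((1 : ℂ) / 2))⁻¹ + ((n : ℂ) - 1)) / ((z ^ n) ^ ((1 : ℂ) / 2) + ((n : ℂ) - 1))

namespace Complex

lemma sq_cpow_half_of_re_pos_or {z : ℂ} (h : 0 < z.re ∨ (z.re = 0 ∧ 0 ≤ z.im)) :
    (z ^ 2) ^ ((1 : ℂ) / 2) = z := by
  rw [one_div]
  refine pow_cpow_ofNat_inv (neg_pi_div_two_lt_arg_iff.2 ?_) (arg_le_pi_div_two_iff.2 ?_)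
  · exact h.imp_right And.right
  · exact .inl (h.elim le_of_lt fun h => h.1.ge)

lemma sq_cpow_half_of_not_re_pos_or {z : ℂ} (h : ¬(0 < z.re ∨ (z.re = 0 ∧ 0 ≤ z.im))) :
    (z ^ 2) ^ ((1 : ℂ) / 2) = -z := by
  push Not at h
  obtain ⟨hre, him⟩ := h
  rw [← neg_sq]
  refine sq_cpow_half_of_re_pos_or ?_
  rcases hre.lt_or_eq with hre | hre
  · exact .inl (by simpa using hre)
  · exact .inr ⟨by simp [hre], by simpa using (him hre).le⟩

end Complex

lemma Lp_two (z : ℂ) :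
    Lp 2 z = z * (((z ^ 2) ^ ((1 : ℂ) / 2))⁻¹ + 1) / ((z ^ 2) ^ ((1 : ℂ) / 2) + 1) := by
  norm_num [Lp]

lemma Lp_two_of_sq_cpow_half_eq_self {z : ℂ} (hz : z ≠ 0) (hz₁ : z ≠ -1)
    (hs : (z ^ 2) ^ ((1 : ℂ) / 2) = z) : Lp 2 z = 1 := by
  have hz₁' : z + 1 ≠ 0 := fun h => hz₁ (eq_neg_of_add_eq_zero_left h)
  rw [Lp_two, hs, div_eq_one_iff_eq hz₁']
  field_simp
  ring

lemma Lp_two_of_sq_cpow_half_eq_neg {z : ℂ} (hz : z ≠ 0) (hz₁ : z ≠ 1)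
    (hs : (z ^ 2) ^ ((1 : ℂ) / 2) = -z) : Lp 2 z = -1 := by
  have hz₁' : -z + 1 ≠ 0 := fun h => hz₁ (by linear_combination -h)
  rw [Lp_two, hs, div_eq_iff hz₁']
  field_simp
  ring

theorem stmt0 (z₀ : ℂ) (hz : z₀ ≠ 0) :
    (0 < z₀.re ∨ (z₀.re = 0 ∧ 0 ≤ z₀.im) → Lp 2 z₀ = 1) ∧
    (¬(0 < z₀.re ∨ (z₀.re = 0 ∧ 0 ≤ z₀.im)) → Lp 2 z₀ = -1) := by
  refine ⟨fun h => ?_, fun h => ?_⟩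
  · refine Lp_two_of_sq_cpow_half_eq_self hz ?_ (sq_cpow_half_of_re_pos_or h)
    rintro rfl
    norm_num at h
  · refine Lp_two_of_sq_cpow_half_eq_neg hz ?_ (sq_cpow_half_of_not_re_pos_or h)
    rintro rfl
    norm_num at h
end

section
/- For n ≥ 2 and z ∈ ℂ nonzero with arg(z) ≠ (2k+1)π/n for all integers k, the Laguerre iteration function commutes with complex conjugation: L_p(z̄) = conj(L_p(z)). -/
open Complex Real Filter

open scoped ComplexConjugate

theorem Complex.exists_arg_eq_odd_mul_pi_div_of_arg_pow_eq_pi {z : ℂ} {n : ℕ}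
    (h : (z ^ n).arg = π) : ∃ k : ℤ, z.arg = (2 * k + 1) * π / n := by
  rcases eq_or_ne n 0 with rfl | hn
  · simp [Real.pi_ne_zero.symm] at h
  have hangle : ((n * z.arg : ℝ) : Real.Angle) = (π : ℝ) := by
    rw [Real.Angle.natCast_mul_eq_nsmul, ← arg_pow_coe_angle, h]
  obtain ⟨k, hk⟩ := Real.Angle.angle_eq_iff_two_pi_dvd_sub.mp hangle
  refine ⟨k, ?_⟩
  field_simp
  linarith

theorem Lp_conj_of_arg_pow_ne_pi {n : ℕ} {z : ℂ} (h : (z ^ n).arg ≠ π) :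
    Lp n (conj z) = conj (Lp n z) := by
  have hsqrt : (conj z ^ n) ^ ((1 : ℂ) / 2) = conj ((z ^ n) ^ ((1 : ℂ) / 2)) := by
    rw [← map_pow, conj_cpow _ _ h, map_div₀, map_one, map_ofNat]
  simp only [Lp, hsqrt, map_div₀, map_mul, map_add, map_inv₀, map_sub, map_natCast, map_one]

theorem stmt3_general (n : ℕ) (z : ℂ)
    (harg : ∀ k : ℤ, Complex.arg z ≠ (2 * k + 1) * Real.pi / n) :
    Lp n (starRingEnd ℂ z) = starRingEnd ℂ (Lp n z) := by
  refine Lp_conj_of_arg_pow_ne_pi fun h => ?_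
  obtain ⟨k, hk⟩ := exists_arg_eq_odd_mul_pi_div_of_arg_pow_eq_pi h
  exact harg k hk

theorem stmt3 (n : ℕ) (hn : 2 ≤ n) (z : ℂ) (hz : z ≠ 0)
    (harg : ∀ k : ℤ, Complex.arg z ≠ (2 * k + 1) * Real.pi / n) :
    Lp n (starRingEnd ℂ z) = starRingEnd ℂ (Lp n z) :=
  stmt3_general n z harg
end

section
/- For n ≥ 2 and all nonzero z ∈ ℂ, the Laguerre iteration function commutes with inversion in the unit circle: L_p(1/z̄) = 1/conj(L_p(z)). -/
/-!
The inversion `w ↦ (conj w)⁻¹ = w / |w|²` keeps the argument of `w`, so it commutes with the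
principal power `w ↦ w ^ r` for real `r`; in particular it commutes with `√(z ^ n)`. Writing
`s = √(z ^ n)`, we get `Lp n (conj z)⁻¹ = (conj z)⁻¹ (conj s + n - 1) / ((conj s)⁻¹ + n - 1)`,
which is the inverse of `conj (Lp n z)` by field arithmetic.
-/

open Complex Real Filter

open ComplexConjugate

namespace Complex

theorem inv_conj_cpow_ofReal (w : ℂ) (r : ℝ) : (conj w)⁻¹ ^ (r : ℂ) = (conj (w ^ (r : ℂ)))⁻¹ := by
  have harg : (conj w).arg = π ↔ w.arg = π := by
    simp only [arg_eq_pi_iff, conj_re, conj_im, neg_eq_zero]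
  by_cases h : w.arg = π
  · -- on the branch cut `w` is a negative real, so `conj w = w`
    have hw : conj w = w := conj_eq_iff_im.mpr (arg_eq_pi_iff.mp h).2
    rw [inv_cpow_eq_ite, if_pos (harg.mpr h), conj_ofReal, hw, map_inv₀]
  · rw [inv_cpow _ _ (mt harg.mp h), conj_cpow _ _ h, conj_ofReal]

end Complex

theorem Lp_inv_conj (n : ℕ) (z : ℂ) :
    Lp n (conj z)⁻¹ = (conj z)⁻¹ * (conj ((z ^ n) ^ ((1 : ℂ) / 2)) + ((n : ℂ) - 1)) /
      ((conj ((z ^ n) ^ ((1 : ℂ) / 2)))⁻¹ + ((n : ℂ) - 1)) := by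
  have hsqrt : ((conj z)⁻¹ ^ n) ^ ((1 : ℂ) / 2) = (conj ((z ^ n) ^ ((1 : ℂ) / 2)))⁻¹ := by
    have h := inv_conj_cpow_ofReal (z ^ n) (1 / 2)
    push_cast at h
    rw [inv_pow, ← map_pow, h]
  rw [Lp, hsqrt, inv_inv]

theorem stmt4_general (n : ℕ) (z : ℂ) :
    Lp n (1 / starRingEnd ℂ z) = 1 / starRingEnd ℂ (Lp n z) := by
  rw [one_div, Lp_inv_conj, Lp]
  simp only [map_mul, map_add, map_inv₀, map_sub, map_natCast, map_one, div_eq_mul_inv, mul_inv,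
    inv_inv]
  ring

theorem stmt4 (n : ℕ) (hn : 2 ≤ n) (z : ℂ) (hz : z ≠ 0) :
    Lp n (1 / starRingEnd ℂ z) = 1 / starRingEnd ℂ (Lp n z) :=
  stmt4_general n z
end

section
/- For n ≥ 2, r > 0, and θ ∈ ℝ, the squared modulus of L_p at z = r·e^{iθ} equals |L_p(re^{iθ})|² = (1/r^{n-2}) · (1 + (n-1)²r^n + 2(n-1)|cos(nθ/2)|r^{n/2}) / (r^n + (n-1)² + 2(n-1)|cos(nθ/2)|r^{n/2}). -/
/-!
Put `s = √(zⁿ)` and `c = n - 1`. Since `s² = zⁿ`, `‖s‖² = rⁿ`, and the half-angle formula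
`Re √w = √((‖w‖ + Re w) / 2)` gives `Re s = r^(n/2) |cos (nθ/2)|`. Writing `s⁻¹ + c = (1 + c s) / s`,
both `‖1 + c s‖²` and `‖s + c‖²` expand by `‖u + c‖² = ‖u‖² + 2 c Re u + c²`.
-/

open Complex Real Filter

namespace Complex

lemma norm_add_ofReal_sq (s : ℂ) (c : ℝ) : ‖s + c‖ ^ 2 = ‖s‖ ^ 2 + 2 * c * s.re + c ^ 2 := by
  simp only [Complex.sq_norm, normSq_apply, add_re, add_im, ofReal_re, ofReal_im, add_zero]
  ring

lemma norm_inv_add_ofReal_sq {s : ℂ} (hs : s ≠ 0) (c : ℝ) :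
    ‖s⁻¹ + c‖ ^ 2 = (1 + 2 * c * s.re + c ^ 2 * ‖s‖ ^ 2) / ‖s‖ ^ 2 := by
  have h : s⁻¹ + c = ((c * s : ℂ) + (1 : ℝ)) / s := by
    field_simp
    push_cast
    ring
  rw [h, norm_div, div_pow, norm_add_ofReal_sq, norm_mul, norm_real, Real.norm_eq_abs,
    re_ofReal_mul, mul_pow, sq_abs]
  ring

lemma norm_cpow_inv_two_sq (x : ℂ) : ‖x ^ (2⁻¹ : ℂ)‖ ^ 2 = ‖x‖ := by
  rw [← norm_pow, cpow_ofNat_inv_pow]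

lemma ofReal_mul_exp_mul_I_pow (r θ : ℝ) (n : ℕ) :
    ((r : ℂ) * exp (θ * I)) ^ n = ((r ^ n : ℝ) : ℂ) * exp ((n * θ : ℝ) * I) := by
  rw [mul_pow, ← exp_nat_mul]
  push_cast
  ring_nf

end Complex

lemma Real.sqrt_one_add_cos_div_two (x : ℝ) : √((1 + cos x) / 2) = |cos (x / 2)| := by
  rw [← sqrt_sq_eq_abs, Real.cos_sq, mul_div_cancel₀ x two_ne_zero]
  ring_nf

lemma norm_Lp_sq (n : ℕ) {z : ℂ} (hz : z ≠ 0) :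
    ‖Lp n z‖ ^ 2 = ‖z‖ ^ 2 / ‖z ^ n‖ *
      ((1 + 2 * ((n : ℝ) - 1) * ((z ^ n) ^ (2⁻¹ : ℂ)).re + ((n : ℝ) - 1) ^ 2 * ‖z ^ n‖) /
        (‖z ^ n‖ + 2 * ((n : ℝ) - 1) * ((z ^ n) ^ (2⁻¹ : ℂ)).re + ((n : ℝ) - 1) ^ 2)) := by
  have hs : (z ^ n) ^ (2⁻¹ : ℂ) ≠ 0 := by
    intro hs0
    have h := norm_cpow_inv_two_sq (z ^ n)
    rw [hs0, norm_zero, zero_pow two_ne_zero, eq_comm, norm_eq_zero] at h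
    exact pow_ne_zero n hz h
  have hc : (n : ℂ) - 1 = (((n : ℝ) - 1 : ℝ) : ℂ) := by push_cast; rfl
  rw [Lp, one_div, hc, norm_div, norm_mul, div_pow, mul_pow, norm_inv_add_ofReal_sq hs,
    norm_add_ofReal_sq, norm_cpow_inv_two_sq]
  ring

lemma re_cpow_inv_two_polar_pow {r : ℝ} (hr : 0 ≤ r) (θ : ℝ) (n : ℕ) :
    ((((r : ℂ) * exp (θ * I)) ^ n) ^ (2⁻¹ : ℂ)).re = r ^ ((n : ℝ) / 2) * |Real.cos (n * θ / 2)| := by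
  have hrn : 0 ≤ r ^ n := pow_nonneg hr n
  rw [cpow_inv_two_re, ofReal_mul_exp_mul_I_pow, norm_mul, norm_exp_ofReal_mul_I, norm_real,
    Real.norm_eq_abs, abs_of_nonneg hrn, re_ofReal_mul, exp_ofReal_mul_I_re, mul_one,
    ← mul_one_add, mul_div_assoc, sqrt_mul hrn, sqrt_one_add_cos_div_two, sqrt_eq_rpow,
    ← rpow_natCast, ← rpow_mul hr]
  ring_nf

theorem stmt5_general (n : ℕ) (r θ : ℝ) (hr : 0 < r) :
    ‖Lp n ((r : ℂ) * Complex.exp (θ * Complex.I))‖ ^ 2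
      = (1 / r ^ ((n : ℝ) - 2)) *
        ((1 + ((n : ℝ) - 1) ^ 2 * r ^ (n : ℝ)
            + 2 * ((n : ℝ) - 1) * |Real.cos ((n : ℝ) * θ / 2)| * r ^ ((n : ℝ) / 2)) /
         (r ^ (n : ℝ) + ((n : ℝ) - 1) ^ 2
            + 2 * ((n : ℝ) - 1) * |Real.cos ((n : ℝ) * θ / 2)| * r ^ ((n : ℝ) / 2))) := by
  have hz : ‖(r : ℂ) * exp (θ * I)‖ = r := by
    rw [norm_mul, norm_exp_ofReal_mul_I, norm_real, Real.norm_eq_abs, abs_of_pos hr, mul_one]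
  have hz0 : (r : ℂ) * exp (θ * I) ≠ 0 := by
    rw [← norm_pos_iff, hz]
    exact hr
  rw [norm_Lp_sq n hz0, re_cpow_inv_two_polar_pow hr.le, norm_pow, hz, ← rpow_natCast r n,
    rpow_sub hr, rpow_two]
  field_simp
  ring

theorem stmt5 (n : ℕ) (hn : 2 ≤ n) (r θ : ℝ) (hr : 0 < r) :
    ‖Lp n ((r : ℂ) * Complex.exp (θ * Complex.I))‖ ^ 2
      = (1 / r ^ ((n : ℝ) - 2)) *
        ((1 + ((n : ℝ) - 1) ^ 2 * r ^ (n : ℝ)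
            + 2 * ((n : ℝ) - 1) * |Real.cos ((n : ℝ) * θ / 2)| * r ^ ((n : ℝ) / 2)) /
         (r ^ (n : ℝ) + ((n : ℝ) - 1) ^ 2
            + 2 * ((n : ℝ) - 1) * |Real.cos ((n : ℝ) * θ / 2)| * r ^ ((n : ℝ) / 2))) :=
  stmt5_general n r θ hr
end

section
/- For n ≥ 2 and z on the unit circle (|z| = 1), |L_p(z)| = 1; that is, the unit circle is invariant under the Laguerre iteration function. -/
open Complex Real Filter

/-!
On the unit circle the principal square root `w` of `z ^ n` is again unimodular, so `w⁻¹ = conj w`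
and the numerator of `Lp n z / z` is the conjugate of its denominator. The denominator cannot
vanish because the principal square root lies in the closed right half-plane while `n - 1 ≥ 1`.
-/

namespace Complex

lemma norm_cpow_half (x : ℂ) : ‖x ^ (1 / 2 : ℂ)‖ = √‖x‖ := by
  have h := norm_cpow_real x (1 / 2)
  push_cast at h
  rw [h, Real.sqrt_eq_rpow]

lemma re_cpow_half_nonneg (x : ℂ) : 0 ≤ (x ^ (1 / 2 : ℂ)).re := by
  rcases eq_or_ne x 0 with rfl | hx
  · simp
  rw [cpow_def_of_ne_zero hx, exp_re]
  have him : (log x * (1 / 2)).im = arg x / 2 := by simp [log_im, div_eq_mul_inv]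
  refine mul_nonneg (Real.exp_pos _).le (Real.cos_nonneg_of_mem_Icc ⟨?_, ?_⟩) <;>
    linarith [neg_pi_lt_arg x, arg_le_pi x]

lemma add_ofReal_ne_zero_of_re_nonneg {w : ℂ} (hw : 0 ≤ w.re) {c : ℝ} (hc : 0 < c) :
    w + c ≠ 0 := by
  intro h
  have hre := congrArg re h
  simp only [add_re, ofReal_re, zero_re] at hre
  linarith

lemma norm_inv_add_ofReal_eq {w : ℂ} (hw : ‖w‖ = 1) (c : ℝ) : ‖w⁻¹ + c‖ = ‖w + c‖ := by
  have hinv : w⁻¹ = starRingEnd ℂ w := by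
    rw [inv_def, normSq_eq_norm_sq, hw, one_pow, inv_one, ofReal_one, mul_one]
  rw [hinv, ← norm_conj (w + c), map_add, conj_ofReal]

lemma norm_inv_add_div_add_eq_one {w : ℂ} (hw : ‖w‖ = 1) (hre : 0 ≤ w.re) {c : ℝ} (hc : 0 < c) :
    ‖(w⁻¹ + c) / (w + c)‖ = 1 := by
  rw [norm_div, norm_inv_add_ofReal_eq hw,
    div_self (norm_ne_zero_iff.mpr (add_ofReal_ne_zero_of_re_nonneg hre hc))]

end Complex

theorem stmt6 (n : ℕ) (hn : 2 ≤ n) (z : ℂ) (hz : ‖z‖ = 1) :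
    ‖Lp n z‖ = 1 := by
  have hw : ‖(z ^ n) ^ (1 / 2 : ℂ)‖ = 1 := by
    rw [norm_cpow_half, norm_pow, hz, one_pow, Real.sqrt_one]
  have hc : (n : ℂ) - 1 = ((n - 1 : ℝ) : ℂ) := by push_cast; ring
  have hc_pos : (0 : ℝ) < n - 1 := by
    have : (2 : ℝ) ≤ n := by exact_mod_cast hn
    linarith
  rw [Lp, hc, mul_div_assoc, norm_mul, hz, one_mul,
    norm_inv_add_div_add_eq_one hw (re_cpow_half_nonneg _) hc_pos]
end

section
/- For n ≥ 5 and any θ ∈ ℝ, the function f(r) = f_n(r, θ) has exactly three positive zeros r_D, 1, r_E satisfying r_D < 1 < r_E, and r_E = 1/r_D. -/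
open Complex Real Filter

/-- The characteristic function `f_n(r, θ)`. -/
noncomputable def fchar (n : ℕ) (r θ : ℝ) : ℝ :=
  r ^ (2 * (n : ℝ) - 4)
    + 2 * ((n : ℝ) - 1) * |Real.cos ((n : ℝ) * θ / 2)| * r ^ ((n : ℝ) / 2) * (r ^ ((n : ℝ) - 4) - 1)
    - ((n : ℝ) - 1) ^ 2 * r ^ (n : ℝ)
    + ((n : ℝ) - 1) ^ 2 * r ^ ((n : ℝ) - 4) - 1

/-!
Substituting `r = exp x` gives `f_n(exp x, θ) = 2 exp ((n - 2) x) h(x)` with `h = sinhChar n B`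
and `B = 2 (n - 1) |cos (n θ / 2)| ∈ [0, 2 (n - 1)]`. As `h` is odd, it suffices that `h` has
exactly one positive zero `x₀`; then `r_D = exp (-x₀)` and `r_E = exp x₀`.
Existence is the intermediate value theorem. For uniqueness, `h(x) / sinh (κ x)` is strictly
increasing on `(0, ∞)`, with `κ = 2` for `n ≥ 8` and `κ = n - 2` for `n < 8`. Its derivative has
the sign of a Wronskian which, by the product-to-sum formulas, is a combination of the terms
`(ν - μ) sinh ((ν + μ) x) - (ν + μ) sinh ((ν - μ) x)`. These are positive for `0 < μ < ν` because
`sinh t / t` is increasing (`sinh` is strictly convex on `[0, ∞)`); for `n ≥ 8` every term then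
has the right sign, while for `n < 8` the bound `B ≤ 2 (n - 1)` and three more instances of the
same inequality are needed.
-/

open Set

namespace Real

theorem strictConvexOn_sinh : StrictConvexOn ℝ (Ici 0) sinh :=
  strictConvexOn_of_deriv2_pos (convex_Ici 0) continuous_sinh.continuousOn fun x hx => by
    rw [interior_Ici, mem_Ioi] at hx
    simpa [deriv_sinh, deriv_cosh] using sinh_pos_iff.mpr hx

theorem mul_sinh_mul_lt_mul_sinh_mul {p q x : ℝ} (hq : 0 < q) (hqp : q < p) (hx : 0 < x) :
    p * sinh (q * x) < q * sinh (p * x) := by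
  have hqx : 0 < q * x := mul_pos hq hx
  have hpx : 0 < p * x := mul_pos (hq.trans hqp) hx
  have h := strictConvexOn_sinh.secant_strict_mono (a := 0) self_mem_Ici hqx.le hpx.le
    hqx.ne' hpx.ne' (mul_lt_mul_of_pos_right hqp hx)
  simp only [sinh_zero, sub_zero] at h
  rw [div_lt_div_iff₀ hqx hpx] at h
  nlinarith

theorem mul_sinh_mul_le_mul_sinh_mul {p q x : ℝ} (hq : 0 ≤ q) (hqp : q ≤ p) (hx : 0 < x) :
    p * sinh (q * x) ≤ q * sinh (p * x) := by
  rcases hq.eq_or_lt with rfl | hq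
  · simp
  rcases hqp.eq_or_lt with rfl | hqp
  · rfl
  exact (mul_sinh_mul_lt_mul_sinh_mul hq hqp hx).le

theorem sinh_one_lt_two : sinh 1 < 2 := by
  rw [sinh_eq]
  have := exp_one_lt_d9
  have := exp_pos (-1)
  nlinarith [exp_neg 1]

/-- The Wronskian `sinh (μ x) * (sinh (ν x))' - (sinh (μ x))' * sinh (ν x)`, in product-to-sum
form. -/
noncomputable def sinhWronskian (μ ν x : ℝ) : ℝ :=
  ((ν - μ) * sinh ((ν + μ) * x) - (ν + μ) * sinh ((ν - μ) * x)) / 2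

theorem sinhWronskian_self (μ x : ℝ) : sinhWronskian μ μ x = 0 := by
  simp [sinhWronskian]

theorem sinhWronskian_swap (μ ν x : ℝ) : sinhWronskian μ ν x = -sinhWronskian ν μ x := by
  rw [sinhWronskian, sinhWronskian, add_comm ν μ, ← neg_sub μ ν, neg_mul (μ - ν) x, sinh_neg]
  ring

theorem sinhWronskian_pos {μ ν x : ℝ} (hμ : 0 < μ) (hμν : μ < ν) (hx : 0 < x) :
    0 < sinhWronskian μ ν x := by
  have := mul_sinh_mul_lt_mul_sinh_mul (sub_pos.mpr hμν) (by linarith : ν - μ < ν + μ) hx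
  rw [sinhWronskian]
  linarith

theorem sinhWronskian_nonneg {μ ν x : ℝ} (hμ : 0 < μ) (hμν : μ ≤ ν) (hx : 0 < x) :
    0 ≤ sinhWronskian μ ν x := by
  rcases hμν.eq_or_lt with rfl | hμν
  · rw [sinhWronskian_self]
  · exact (sinhWronskian_pos hμ hμν hx).le

theorem hasDerivAt_sinh_mul_div_sinh_mul (μ ν : ℝ) {x : ℝ} (hx : sinh (μ * x) ≠ 0) :
    HasDerivAt (fun y => sinh (ν * y) / sinh (μ * y))
      (sinhWronskian μ ν x / sinh (μ * x) ^ 2) x := by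
  have hν := ((hasDerivAt_id' x).const_mul ν).sinh
  have hμ := ((hasDerivAt_id' x).const_mul μ).sinh
  refine (hν.div hμ hx).congr_deriv ?_
  simp only [sinhWronskian, mul_one, add_mul, sub_mul, sinh_add, sinh_sub]
  ring

end Real

noncomputable def sinhChar (N B x : ℝ) : ℝ :=
  Real.sinh ((N - 2) * x) + B * Real.sinh ((N - 4) / 2 * x) - (N - 1) ^ 2 * Real.sinh (2 * x)

theorem fchar_exp (n : ℕ) (θ x : ℝ) :
    fchar n (Real.exp x) θ =
      2 * Real.exp ((n - 2) * x) * sinhChar n (2 * (n - 1) * |Real.cos (n * θ / 2)|) x := by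
  simp only [fchar, sinhChar, ← Real.exp_mul, Real.sinh_eq]
  ring_nf
  simp only [sq, mul_assoc, ← Real.exp_add]
  ring_nf
  rw [Real.exp_zero]
  ring

noncomputable def sinhCharWronskian (κ N B x : ℝ) : ℝ :=
  Real.sinhWronskian κ (N - 2) x + B * Real.sinhWronskian κ ((N - 4) / 2) x
    - (N - 1) ^ 2 * Real.sinhWronskian κ 2 x

theorem hasDerivAt_sinhChar_div_sinh_mul (κ N B : ℝ) {x : ℝ} (hx : Real.sinh (κ * x) ≠ 0) :
    HasDerivAt (fun y => sinhChar N B y / Real.sinh (κ * y))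
      (sinhCharWronskian κ N B x / Real.sinh (κ * x) ^ 2) x := by
  have ha := Real.hasDerivAt_sinh_mul_div_sinh_mul κ (N - 2) hx
  have hb := Real.hasDerivAt_sinh_mul_div_sinh_mul κ ((N - 4) / 2) hx
  have h2 := Real.hasDerivAt_sinh_mul_div_sinh_mul κ 2 hx
  have e : ∀ y, sinhChar N B y / Real.sinh (κ * y) = Real.sinh ((N - 2) * y) / Real.sinh (κ * y)
      + B * (Real.sinh ((N - 4) / 2 * y) / Real.sinh (κ * y))
      - (N - 1) ^ 2 * (Real.sinh (2 * y) / Real.sinh (κ * y)) := fun y => by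
    simp only [sinhChar]
    ring
  simp only [e]
  exact ((ha.add (hb.const_mul B)).sub (h2.const_mul ((N - 1) ^ 2))).congr_deriv
    (by simp only [sinhCharWronskian]; ring)

theorem strictMonoOn_sinhChar_div_sinh_mul {κ N B : ℝ} (hκ : 0 < κ)
    (hW : ∀ x, 0 < x → 0 < sinhCharWronskian κ N B x) :
    StrictMonoOn (fun x => sinhChar N B x / Real.sinh (κ * x)) (Ioi 0) := by
  have hs : ∀ x ∈ Ioi (0 : ℝ), 0 < Real.sinh (κ * x) := fun x hx =>
    Real.sinh_pos_iff.mpr (mul_pos hκ hx)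
  have hd : ∀ x ∈ Ioi (0 : ℝ), HasDerivAt (fun y => sinhChar N B y / Real.sinh (κ * y))
      (sinhCharWronskian κ N B x / Real.sinh (κ * x) ^ 2) x := fun x hx =>
    hasDerivAt_sinhChar_div_sinh_mul κ N B (hs x hx).ne'
  refine strictMonoOn_of_hasDerivWithinAt_pos (convex_Ioi 0)
    (f' := fun x => sinhCharWronskian κ N B x / Real.sinh (κ * x) ^ 2)
    (fun x hx => (hd x hx).continuousAt.continuousWithinAt) (fun x hx => ?_) (fun x hx => ?_) <;>
    rw [interior_Ioi] at hx
  · exact (hd x hx).hasDerivWithinAt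
  · exact div_pos (hW x hx) (pow_pos (hs x hx) 2)

theorem sinhCharWronskian_two_pos {N B x : ℝ} (hN : 8 ≤ N) (hB : 0 ≤ B) (hx : 0 < x) :
    0 < sinhCharWronskian 2 N B x := by
  have ha := Real.sinhWronskian_pos two_pos (by linarith : (2 : ℝ) < N - 2) hx
  have hb := Real.sinhWronskian_nonneg two_pos (by linarith : (2 : ℝ) ≤ (N - 4) / 2) hx
  rw [sinhCharWronskian, Real.sinhWronskian_self]
  nlinarith

theorem two_mul_sinhWronskian_lt {N x : ℝ} (h5 : 5 ≤ N) (h8 : N < 8) (hx : 0 < x) :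
    2 * Real.sinhWronskian ((N - 4) / 2) (N - 2) x
      < (N - 1) * Real.sinhWronskian 2 (N - 2) x := by
  simp only [Real.sinhWronskian]
  rw [show N - 2 + (N - 4) / 2 = (3 * N - 8) / 2 by ring, show N - 2 - (N - 4) / 2 = N / 2 by ring,
    show N - 2 + 2 = N by ring, show N - 2 - 2 = N - 4 by ring]
  have k0 := Real.mul_sinh_mul_lt_mul_sinh_mul (by linarith : 0 < (3 * N - 8) / 2)
    (by linarith : (3 * N - 8) / 2 < N) hx
  have k1 := Real.mul_sinh_mul_le_mul_sinh_mul (by linarith : 0 ≤ N - 4)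
    (by linarith : N - 4 ≤ N) hx
  have k2 := Real.mul_sinh_mul_le_mul_sinh_mul (by linarith : 0 ≤ N - 4)
    (by linarith : N - 4 ≤ N / 2) hx
  -- after `k0`, the bounds `k1`, `k2` leave a multiple of `sinh ((N - 4) x)` whose coefficient
  -- vanishes identically in `N`
  have c1 : 0 ≤ (2 * N ^ 2 - 13 * N + 16) / 2 := by nlinarith
  have hT : 0 ≤ (N - 4) * ((2 * N ^ 2 - 13 * N + 16) / 2 * Real.sinh (N * x)
      + (3 * N - 8) * Real.sinh (N / 2 * x) - N * (N - 1) * Real.sinh ((N - 4) * x)) := by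
    nlinarith [mul_le_mul_of_nonneg_left k1 c1,
      mul_le_mul_of_nonneg_left k2 (by linarith : (0 : ℝ) ≤ 3 * N - 8)]
  have hT' := (mul_nonneg_iff_of_pos_left (by linarith : (0 : ℝ) < N - 4)).mp hT
  linarith

theorem sinhCharWronskian_sub_two_pos {N B x : ℝ} (h5 : 5 ≤ N) (h8 : N < 8)
    (hB1 : B ≤ 2 * (N - 1)) (hx : 0 < x) : 0 < sinhCharWronskian (N - 2) N B x := by
  have hb := Real.sinhWronskian_pos (by linarith : 0 < (N - 4) / 2)
    (by linarith : (N - 4) / 2 < N - 2) hx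
  have key := two_mul_sinhWronskian_lt h5 h8 hx
  rw [sinhCharWronskian, Real.sinhWronskian_self, Real.sinhWronskian_swap _ ((N - 4) / 2),
    Real.sinhWronskian_swap _ 2]
  nlinarith [mul_le_mul_of_nonneg_right hB1 hb.le,
    mul_pos (by linarith : (0 : ℝ) < N - 1) (sub_pos.mpr key)]

theorem eq_of_sinhChar_eq_zero {N B : ℝ} (hN : 5 ≤ N) (hB0 : 0 ≤ B) (hB1 : B ≤ 2 * (N - 1))
    {x y : ℝ} (hx : 0 < x) (hy : 0 < y) (hfx : sinhChar N B x = 0) (hfy : sinhChar N B y = 0) :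
    x = y := by
  obtain ⟨κ, hκ, hW⟩ : ∃ κ : ℝ, 0 < κ ∧ ∀ x, 0 < x → 0 < sinhCharWronskian κ N B x := by
    rcases lt_or_ge N 8 with h8 | h8
    · exact ⟨N - 2, by linarith, fun x hx => sinhCharWronskian_sub_two_pos hN h8 hB1 hx⟩
    · exact ⟨2, two_pos, fun x hx => sinhCharWronskian_two_pos h8 hB0 hx⟩
  exact (strictMonoOn_sinhChar_div_sinh_mul hκ hW).injOn hx hy (by simp only [hfx, hfy, zero_div])

theorem sinhChar_neg (N B x : ℝ) : sinhChar N B (-x) = -sinhChar N B x := by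
  simp only [sinhChar, mul_neg, Real.sinh_neg]
  ring

theorem sinhChar_zero (N B : ℝ) : sinhChar N B 0 = 0 := by
  simp [sinhChar]

theorem continuous_sinhChar (N B : ℝ) : Continuous (sinhChar N B) := by
  unfold sinhChar
  fun_prop

theorem sinhChar_inv_sub_two_neg {N B : ℝ} (hN : 5 ≤ N) (hB1 : B ≤ 2 * (N - 1)) :
    sinhChar N B (N - 2)⁻¹ < 0 := by
  have ha : 0 < N - 2 := by linarith
  set x := (N - 2)⁻¹
  have hx : 0 < x := inv_pos.mpr ha
  have hax : (N - 2) * x = 1 := mul_inv_cancel₀ ha.ne'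
  have kb := Real.mul_sinh_mul_le_mul_sinh_mul (by linarith : 0 ≤ (N - 4) / 2)
    (by linarith : (N - 4) / 2 ≤ N - 2) hx
  rw [hax] at kb
  have k2 : 2 * x ≤ Real.sinh (2 * x) := Real.self_le_sinh_iff.mpr (by positivity)
  have hs1 : 0 < Real.sinh 1 := Real.sinh_pos_iff.mpr one_pos
  have hsb : 0 ≤ Real.sinh ((N - 4) / 2 * x) := Real.sinh_nonneg_iff.mpr (by nlinarith)
  rw [sinhChar, hax]
  nlinarith [mul_le_mul_of_nonneg_left kb (by linarith : (0 : ℝ) ≤ 2 * (N - 1)),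
    mul_le_mul_of_nonneg_right hB1 hsb,
    mul_le_mul_of_nonneg_left k2 (sq_nonneg (N - 1)), Real.sinh_one_lt_two]

theorem sinhChar_log_pos {N B : ℝ} (hN : 5 ≤ N) (hB0 : 0 ≤ B) :
    0 < sinhChar N B (Real.log (2 * (N - 1) ^ 2)) := by
  set C := (N - 1) ^ 2
  have hC : 16 ≤ C := by nlinarith
  set x := Real.log (2 * C)
  have hx : 0 < x := Real.log_pos (by linarith)
  have hcosh : C < Real.cosh x := by
    rw [Real.cosh_eq, Real.exp_log (by linarith)]
    linarith [Real.exp_pos (-x)]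
  have h2x : 0 < Real.sinh (2 * x) := Real.sinh_pos_iff.mpr (by linarith)
  have h3x : Real.sinh (3 * x) ≤ Real.sinh ((N - 2) * x) :=
    Real.sinh_le_sinh.mpr (mul_le_mul_of_nonneg_right (by linarith) hx.le)
  have hb : 0 ≤ B * Real.sinh ((N - 4) / 2 * x) :=
    mul_nonneg hB0 (Real.sinh_nonneg_iff.mpr (mul_nonneg (by linarith) hx.le))
  have hsplit : Real.sinh (3 * x)
      = Real.sinh (2 * x) * Real.cosh x + Real.cosh (2 * x) * Real.sinh x := by
    rw [← Real.sinh_add]; ring_nf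
  have hrest : 0 < Real.cosh (2 * x) * Real.sinh x :=
    mul_pos (Real.cosh_pos _) (Real.sinh_pos_iff.mpr hx)
  rw [sinhChar]
  nlinarith [mul_lt_mul_of_pos_left hcosh h2x]

theorem exists_pos_sinhChar_eq_zero {N B : ℝ} (hN : 5 ≤ N) (hB0 : 0 ≤ B)
    (hB1 : B ≤ 2 * (N - 1)) : ∃ x₀, 0 < x₀ ∧ sinhChar N B x₀ = 0 := by
  have ha : 0 < (N - 2)⁻¹ := inv_pos.mpr (by linarith)
  have hb : 0 < Real.log (2 * (N - 1) ^ 2) := Real.log_pos (by nlinarith)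
  obtain ⟨x₀, hx₀, hzero⟩ := intermediate_value_uIcc (continuous_sinhChar N B).continuousOn
    (mem_uIcc_of_le (sinhChar_inv_sub_two_neg hN hB1).le (sinhChar_log_pos hN hB0).le)
  refine ⟨x₀, ?_, hzero⟩
  rcases mem_uIcc.mp hx₀ with h | h
  · exact ha.trans_le h.1
  · exact hb.trans_le h.1

theorem exists_sinhChar_eq_zero_iff {N B : ℝ} (hN : 5 ≤ N) (hB0 : 0 ≤ B)
    (hB1 : B ≤ 2 * (N - 1)) :
    ∃ x₀, 0 < x₀ ∧ ∀ x, sinhChar N B x = 0 ↔ x = -x₀ ∨ x = 0 ∨ x = x₀ := by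
  obtain ⟨x₀, hx₀, hzero⟩ := exists_pos_sinhChar_eq_zero hN hB0 hB1
  refine ⟨x₀, hx₀, fun x => ⟨fun hx => ?_, ?_⟩⟩
  · rcases lt_trichotomy x 0 with hneg | rfl | hpos
    · have hnx : sinhChar N B (-x) = 0 := by rw [sinhChar_neg, hx, neg_zero]
      left
      linarith [eq_of_sinhChar_eq_zero hN hB0 hB1 (neg_pos.mpr hneg) hx₀ hnx hzero]
    · exact Or.inr (Or.inl rfl)
    · exact Or.inr (Or.inr (eq_of_sinhChar_eq_zero hN hB0 hB1 hpos hx₀ hx hzero))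
  · rintro (rfl | rfl | rfl)
    · rw [sinhChar_neg, hzero, neg_zero]
    · exact sinhChar_zero N B
    · exact hzero

theorem stmt7 (n : ℕ) (hn : 5 ≤ n) (θ : ℝ) :
    ∃ rD rE : ℝ, 0 < rD ∧ rD < 1 ∧ 1 < rE ∧ rE = 1 / rD ∧
      fchar n rD θ = 0 ∧ fchar n 1 θ = 0 ∧ fchar n rE θ = 0 ∧
      ∀ r : ℝ, 0 < r → fchar n r θ = 0 → r = rD ∨ r = 1 ∨ r = rE := by
  have hN : (5 : ℝ) ≤ n := by exact_mod_cast hn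
  obtain ⟨x₀, hx₀, hzeros⟩ := exists_sinhChar_eq_zero_iff hN
    (mul_nonneg (by linarith) (abs_nonneg _))
    (mul_le_of_le_one_right (by linarith) (abs_cos_le_one _))
  have hf : ∀ x, fchar n (Real.exp x) θ = 0 ↔ x = -x₀ ∨ x = 0 ∨ x = x₀ := fun x => by
    rw [fchar_exp, mul_eq_zero, or_iff_right (by positivity), hzeros]
  refine ⟨Real.exp (-x₀), Real.exp x₀, Real.exp_pos _, Real.exp_lt_one_iff.mpr (by linarith),
    Real.one_lt_exp_iff.mpr hx₀, by rw [Real.exp_neg, one_div, inv_inv], (hf _).mpr (Or.inl rfl),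
    by simpa using (hf 0).mpr (Or.inr (Or.inl rfl)), (hf _).mpr (Or.inr (Or.inr rfl)),
    fun r hr hr0 => ?_⟩
  rw [← Real.exp_log hr] at hr0 ⊢
  rcases (hf _).mp hr0 with h | h | h <;> simp [h]
end

section
/- For n ≥ 5 and any θ ∈ ℝ, every positive zero r of the characteristic function f_n(·, θ) satisfies r < (n-1)^{2/(n-4)}; moreover (n-1)^{2/(n-4)} → 1 as n → ∞. -/
/-!
Put `s = r ^ (n - 4)`. Since `r ^ (2n - 4) = s · r ^ n`, the characteristic function splits as
`r ^ n (s - (n-1)²) + 2 (n-1) |cos (nθ/2)| r ^ (n/2) (s - 1) + ((n-1)² s - 1)`.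
For `r ≥ (n-1) ^ (2/(n-4))` we have `s ≥ (n-1)² > 1`, so all three summands are nonnegative and
the last one is positive: there is no zero of `f_n(·, θ)` there.
-/

open Complex Real Filter

theorem Real.sq_le_rpow_of_rpow_two_div_le {a r p : ℝ} (ha : 0 ≤ a) (hr : 0 ≤ r) (hp : 0 < p)
    (h : a ^ (2 / p) ≤ r) : a ^ 2 ≤ r ^ p := by
  rw [← Real.rpow_inv_le_iff_of_pos (sq_nonneg a) hr hp, ← Real.rpow_natCast,
    ← Real.rpow_mul ha, Nat.cast_ofNat, ← div_eq_mul_inv]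
  exact h

theorem fchar_eq {n : ℕ} {r : ℝ} (hr : 0 < r) (θ : ℝ) :
    fchar n r θ =
      r ^ (n : ℝ) * (r ^ ((n : ℝ) - 4) - ((n : ℝ) - 1) ^ 2)
        + 2 * ((n : ℝ) - 1) * |Real.cos ((n : ℝ) * θ / 2)| * r ^ ((n : ℝ) / 2)
          * (r ^ ((n : ℝ) - 4) - 1)
        + (((n : ℝ) - 1) ^ 2 * r ^ ((n : ℝ) - 4) - 1) := by
  rw [fchar, show 2 * (n : ℝ) - 4 = ((n : ℝ) - 4) + n by ring, Real.rpow_add hr]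
  ring

theorem fchar_pos_of_sq_le_rpow {n : ℕ} (hn : 3 ≤ n) {r : ℝ} (hr : 0 < r) (θ : ℝ)
    (h : ((n : ℝ) - 1) ^ 2 ≤ r ^ ((n : ℝ) - 4)) : 0 < fchar n r θ := by
  have hn1 : (2 : ℝ) ≤ (n : ℝ) - 1 := by
    have : (3 : ℝ) ≤ n := by exact_mod_cast hn
    linarith
  have hsq : (4 : ℝ) ≤ ((n : ℝ) - 1) ^ 2 := by nlinarith
  have hfirst : 0 ≤ r ^ (n : ℝ) * (r ^ ((n : ℝ) - 4) - ((n : ℝ) - 1) ^ 2) :=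
    mul_nonneg (by positivity) (sub_nonneg.mpr h)
  have hmiddle : 0 ≤ 2 * ((n : ℝ) - 1) * |Real.cos ((n : ℝ) * θ / 2)| * r ^ ((n : ℝ) / 2)
      * (r ^ ((n : ℝ) - 4) - 1) := by
    have : (0 : ℝ) ≤ (n : ℝ) - 1 := by linarith
    exact mul_nonneg (by positivity) (by linarith)
  have hlast : 0 < ((n : ℝ) - 1) ^ 2 * r ^ ((n : ℝ) - 4) - 1 := by nlinarith
  rw [fchar_eq hr]
  linarith

theorem tendsto_sub_one_rpow_two_div_sub_four :
    Tendsto (fun x : ℝ => (x - 1) ^ (2 / (x - 4))) atTop (nhds 1) := by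
  have hshift : Tendsto (fun x : ℝ => x - 1) atTop atTop :=
    tendsto_atTop_add_const_right _ _ tendsto_id
  refine ((tendsto_rpow_div_mul_add 2 1 (-3) zero_ne_one).comp hshift).congr fun x => ?_
  simp only [Function.comp_apply]
  ring_nf

theorem stmt8 (n : ℕ) (hn : 5 ≤ n) (θ : ℝ) :
    (∀ r : ℝ, 0 < r → fchar n r θ = 0 → r < ((n : ℝ) - 1) ^ (2 / ((n : ℝ) - 4))) ∧
    Filter.Tendsto (fun m : ℕ => ((m : ℝ) - 1) ^ (2 / ((m : ℝ) - 4))) Filter.atTop (nhds 1) := by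
  refine ⟨fun r hr hzero => ?_,
    tendsto_sub_one_rpow_two_div_sub_four.comp tendsto_natCast_atTop_atTop⟩
  have hn4 : (0 : ℝ) < (n : ℝ) - 4 := by
    have : (5 : ℝ) ≤ n := by exact_mod_cast hn
    linarith
  by_contra! hge
  have hsq := Real.sq_le_rpow_of_rpow_two_div_le (by linarith) hr.le hn4 hge
  exact (fchar_pos_of_sq_le_rpow (by omega) hr θ hsq).ne' hzero
end

section
/- For n ≥ 5 and θ ∈ ℝ, the derivative ∂f_n/∂r evaluated at r = 1 satisfies f_n'(1, θ) ≤ -2n², and in particular f_n'(1, θ) < 0. -/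
open Complex Real Filter

/-!
At `r = 1` every power `r ^ a` has value `1` and derivative `a`, so
`f_n'(1, θ) = 2n - 4 + 2(n-1)(n-4)|cos(nθ/2)| - 4(n-1)²`. This is affine in `|cos(nθ/2)| ∈ [0, 1]`
with nonnegative slope when `n ≥ 4`, and at `|cos(nθ/2)| = 1` it equals exactly `-2n²`.
-/

theorem Real.hasDerivAt_rpow_const_one (a : ℝ) : HasDerivAt (fun x : ℝ => x ^ a) a 1 := by
  simpa using Real.hasDerivAt_rpow_const (x := 1) (p := a) (Or.inl one_ne_zero)

theorem hasDerivAt_fchar_one (n : ℕ) (θ : ℝ) :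
    HasDerivAt (fun r => fchar n r θ)
      (2 * n - 4 + 2 * (n - 1) * (n - 4) * |Real.cos (n * θ / 2)| - 4 * (n - 1) ^ 2) 1 := by
  set c := |Real.cos (n * θ / 2)|
  have hpow := Real.hasDerivAt_rpow_const_one
  have hmixed := ((hpow (n / 2)).const_mul (2 * ((n : ℝ) - 1) * c)).mul ((hpow (n - 4)).sub_const 1)
  unfold fchar
  refine ((((hpow (2 * n - 4)).add hmixed).sub ((hpow n).const_mul (((n : ℝ) - 1) ^ 2))).add
    ((hpow (n - 4)).const_mul (((n : ℝ) - 1) ^ 2))).sub_const 1 |>.congr_deriv ?_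
  simp only [Real.one_rpow]
  ring

theorem deriv_fchar_one_le (n : ℕ) (hn : 4 ≤ n) (θ : ℝ) :
    deriv (fun r => fchar n r θ) 1 ≤ -2 * (n : ℝ) ^ 2 := by
  have hn' : (4 : ℝ) ≤ n := by exact_mod_cast hn
  have hslope : 0 ≤ ((n : ℝ) - 1) * (n - 4) * (1 - |Real.cos (n * θ / 2)|) :=
    mul_nonneg (mul_nonneg (by linarith) (by linarith)) (sub_nonneg.2 (abs_cos_le_one _))
  rw [(hasDerivAt_fchar_one n θ).deriv]
  linarith

theorem stmt9 (n : ℕ) (hn : 5 ≤ n) (θ : ℝ) :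
    deriv (fun r : ℝ => fchar n r θ) 1 ≤ -2 * (n : ℝ) ^ 2 ∧
    deriv (fun r : ℝ => fchar n r θ) 1 < 0 := by
  have hle := deriv_fchar_one_le n (by omega) θ
  have hpos : (0 : ℝ) < n := by exact_mod_cast (by omega : 0 < n)
  exact ⟨hle, hle.trans_lt (by nlinarith)⟩
end

section
/- For n ≥ 5 and θ ∈ ℝ, f_n((n-1)^{2/(n-4)}, θ) = (n-1)⁴ - 1 + 2n(n-2)(n-1)^{(2n-4)/(n-4)} |cos(nθ/2)|, which is strictly positive. -/
open Complex Real Filter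

lemma fchar_eq_of_rpow_sub_four_eq (n : ℕ) {r : ℝ} (hr : 0 < r)
    (h : r ^ ((n : ℝ) - 4) = ((n : ℝ) - 1) ^ 2) (θ : ℝ) :
    fchar n r θ = ((n : ℝ) - 1) ^ 4 - 1
      + 2 * ((n : ℝ) - 1) * (((n : ℝ) - 1) ^ 2 - 1) * r ^ ((n : ℝ) / 2)
        * |Real.cos ((n : ℝ) * θ / 2)| := by
  have hsplit : r ^ (2 * (n : ℝ) - 4) = r ^ (n : ℝ) * r ^ ((n : ℝ) - 4) := by
    rw [← rpow_add hr]
    ring_nf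
  rw [fchar, hsplit, h]
  ring

lemma rpow_div_rpow_cancel {a m : ℝ} (ha : 0 ≤ a) (hm : m ≠ 0) (k : ℝ) :
    (a ^ (k / m)) ^ m = a ^ k := by
  rw [← rpow_mul ha, div_mul_cancel₀ k hm]

theorem stmt10 (n : ℕ) (hn : 5 ≤ n) (θ : ℝ) :
    fchar n (((n : ℝ) - 1) ^ (2 / ((n : ℝ) - 4))) θ
      = ((n : ℝ) - 1) ^ 4 - 1
        + 2 * (n : ℝ) * ((n : ℝ) - 2) * ((n : ℝ) - 1) ^ ((2 * (n : ℝ) - 4) / ((n : ℝ) - 4))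
          * |Real.cos ((n : ℝ) * θ / 2)| ∧
    0 < fchar n (((n : ℝ) - 1) ^ (2 / ((n : ℝ) - 4))) θ := by
  have hn5 : (5 : ℝ) ≤ n := by exact_mod_cast hn
  have ha : (0 : ℝ) < n - 1 := by linarith
  have hm : (n : ℝ) - 4 ≠ 0 := by linarith
  set r := ((n : ℝ) - 1) ^ (2 / ((n : ℝ) - 4)) with hr_def
  have hr : r ^ ((n : ℝ) - 4) = ((n : ℝ) - 1) ^ 2 := by
    rw [rpow_div_rpow_cancel ha.le hm, rpow_two]
  -- `(n - 1) ^ (1 + n / (n - 4))`, and `1 + n / (n - 4) = (2n - 4) / (n - 4)`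
  have hexp : ((n : ℝ) - 1) * r ^ ((n : ℝ) / 2)
      = ((n : ℝ) - 1) ^ ((2 * (n : ℝ) - 4) / ((n : ℝ) - 4)) := by
    rw [hr_def, ← rpow_mul ha.le]
    nth_rewrite 1 [← rpow_one ((n : ℝ) - 1)]
    rw [← rpow_add ha]
    congr 1
    field_simp
    ring
  have hvalue := fchar_eq_of_rpow_sub_four_eq n (rpow_pos_of_pos ha _) hr θ
  have hcos : 0 ≤ |Real.cos ((n : ℝ) * θ / 2)| := abs_nonneg _
  refine ⟨?_, ?_⟩
  · rw [hvalue]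
    linear_combination (2 * (n : ℝ) * (n - 2) * |Real.cos (n * θ / 2)|) * hexp
  · have hpow : 1 < ((n : ℝ) - 1) ^ 4 := one_lt_pow₀ (by linarith) (by norm_num)
    have hsq : (0 : ℝ) ≤ ((n : ℝ) - 1) ^ 2 - 1 := by nlinarith
    have hr_pos : 0 < r := rpow_pos_of_pos ha _
    rw [hvalue]
    nlinarith [mul_nonneg (mul_nonneg (mul_nonneg ha.le hsq)
      (rpow_pos_of_pos hr_pos ((n : ℝ) / 2)).le) hcos]
end

section
/- The function g(θ) = θ - 2 arctan( sin(nθ/2) / (cos(nθ/2) + n - 1) ) satisfies g(0) = 0 and g'(θ) = 2(n-1)(n-2) sin²(nθ/4) / ((cos(nθ/2) + n - 1)² + sin²(nθ/2)) > 0 for 0 < θ ≤ π/n, hence g(θ) > 0 for 0 < θ ≤ π/n. -/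
open Complex Real Filter

/-! With `a = n - 1` and `x = nθ/2`, the chain rule for `arctan (sin x / (cos x + a))` gives
`g' = 1 - (a + 1) (1 + a cos x) / ((cos x + a)² + sin² x)`, and
`(cos x + a)² + sin² x - (a + 1) (1 + a cos x) = a (a - 1) (1 - cos x)`,
which is `2 (n - 1) (n - 2) sin² (nθ/4)`.
This is positive for `0 < nθ < 4π`, so `g` increases strictly from `g 0 = 0`. -/

theorem hasDerivAt_arctan_sin_div_cos_add {a x : ℝ} (h : Real.cos x + a ≠ 0) :
    HasDerivAt (fun x => Real.arctan (Real.sin x / (Real.cos x + a)))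
      ((1 + a * Real.cos x) / ((Real.cos x + a) ^ 2 + Real.sin x ^ 2)) x := by
  convert ((Real.hasDerivAt_sin x).fun_div ((Real.hasDerivAt_cos x).add_const a) h).arctan using 1
  have hD : (Real.cos x + a) ^ 2 + Real.sin x ^ 2 ≠ 0 := by positivity
  field_simp
  linear_combination -Real.sin_sq_add_cos_sq x

theorem cos_add_sq_add_sin_sq_sub (a x : ℝ) :
    (Real.cos x + a) ^ 2 + Real.sin x ^ 2 - (a + 1) * (1 + a * Real.cos x)
      = 2 * a * (a - 1) * Real.sin (x / 2) ^ 2 := by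
  rw [Real.sin_sq_eq_half_sub (x / 2), mul_div_cancel₀ x two_ne_zero]
  linear_combination Real.sin_sq_add_cos_sq x

theorem cos_add_sub_one_pos {m : ℝ} (hm : 2 < m) (x : ℝ) : 0 < Real.cos x + m - 1 := by
  linarith [Real.neg_one_le_cos x]

/-- For `0 ≤ θ ≤ π / n` this is the argument of `Lp n (exp (θ * I))`: there `Lp` multiplies
`exp (θ * I)` by `conj w / w` with `w = exp (n θ I / 2) + n - 1`. -/
noncomputable def laguerreArg (m θ : ℝ) : ℝ :=
  θ - 2 * Real.arctan (Real.sin (m * θ / 2) / (Real.cos (m * θ / 2) + m - 1))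

noncomputable def laguerreArgDeriv (m θ : ℝ) : ℝ :=
  2 * (m - 1) * (m - 2) * Real.sin (m * θ / 4) ^ 2 /
    ((Real.cos (m * θ / 2) + m - 1) ^ 2 + Real.sin (m * θ / 2) ^ 2)

@[simp]
theorem laguerreArg_zero (m : ℝ) : laguerreArg m 0 = 0 := by
  simp [laguerreArg]

theorem hasDerivAt_laguerreArg {m θ : ℝ} (h : Real.cos (m * θ / 2) + m - 1 ≠ 0) :
    HasDerivAt (laguerreArg m) (laguerreArgDeriv m θ) θ := by
  rw [add_sub_assoc] at h
  have hx : HasDerivAt (fun θ => m * θ / 2) (m / 2) θ := by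
    simpa using ((hasDerivAt_id θ).const_mul m).div_const 2
  have hf := (hasDerivAt_arctan_sin_div_cos_add h).comp θ hx
  refine (((hasDerivAt_id' θ).fun_sub (hf.const_mul 2)).congr_of_eventuallyEq
    (.of_forall fun y => by simp only [laguerreArg, Function.comp, add_sub_assoc])).congr_deriv ?_
  have hD : (Real.cos (m * θ / 2) + (m - 1)) ^ 2 + Real.sin (m * θ / 2) ^ 2 ≠ 0 := by positivity
  have hnumer := cos_add_sq_add_sin_sq_sub (m - 1) (m * θ / 2)
  rw [div_div, show (2 : ℝ) * 2 = 4 by norm_num] at hnumer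
  simp only [laguerreArgDeriv, add_sub_assoc]
  field_simp
  linear_combination hnumer

theorem laguerreArgDeriv_pos {m θ : ℝ} (hm : 2 < m) (hθ : 0 < θ) (hθm : θ < 4 * π / m) :
    0 < laguerreArgDeriv m θ := by
  have hm0 : 0 < m := by linarith
  have hsin : 0 < Real.sin (m * θ / 4) := by
    apply Real.sin_pos_of_pos_of_lt_pi (by positivity)
    rw [lt_div_iff₀ hm0] at hθm
    linarith
  have hnum : 0 < 2 * (m - 1) * (m - 2) := mul_pos (by linarith) (by linarith)
  have hden := pow_pos (cos_add_sub_one_pos hm (m * θ / 2)) 2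
  exact div_pos (mul_pos hnum (pow_pos hsin 2)) (add_pos_of_pos_of_nonneg hden (sq_nonneg _))

theorem strictMonoOn_laguerreArg {m : ℝ} (hm : 2 < m) :
    StrictMonoOn (laguerreArg m) (Set.Icc 0 (4 * π / m)) := by
  have hder (θ : ℝ) := hasDerivAt_laguerreArg (cos_add_sub_one_pos hm (m * θ / 2)).ne'
  apply strictMonoOn_of_deriv_pos (convex_Icc _ _)
    (fun θ _ => (hder θ).continuousAt.continuousWithinAt)
  intro θ hθ
  rw [interior_Icc] at hθ
  rw [(hder θ).deriv]
  exact laguerreArgDeriv_pos hm hθ.1 hθ.2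

theorem laguerreArg_pos {m θ : ℝ} (hm : 2 < m) (hθ : 0 < θ) (hθm : θ ≤ 4 * π / m) :
    0 < laguerreArg m θ := by
  have h0 : (0 : ℝ) ∈ Set.Icc 0 (4 * π / m) := ⟨le_rfl, hθ.le.trans hθm⟩
  simpa using strictMonoOn_laguerreArg hm h0 ⟨hθ.le, hθm⟩ hθ

theorem stmt13 (n : ℕ) (hn : 3 ≤ n) :
    let g : ℝ → ℝ := fun θ =>
      θ - 2 * Real.arctan (Real.sin ((n : ℝ) * θ / 2) / (Real.cos ((n : ℝ) * θ / 2) + (n : ℝ) - 1))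
    g 0 = 0 ∧
    (∀ θ : ℝ, 0 < θ → θ ≤ Real.pi / n →
      deriv g θ = 2 * ((n : ℝ) - 1) * ((n : ℝ) - 2) * Real.sin ((n : ℝ) * θ / 4) ^ 2 /
          ((Real.cos ((n : ℝ) * θ / 2) + (n : ℝ) - 1) ^ 2 + Real.sin ((n : ℝ) * θ / 2) ^ 2) ∧
      0 < deriv g θ) ∧
    (∀ θ : ℝ, 0 < θ → θ ≤ Real.pi / n → 0 < g θ) := by
  intro g
  have hm : (2 : ℝ) < n := by exact_mod_cast hn
  have hderiv (θ : ℝ) : deriv g θ = laguerreArgDeriv n θ :=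
    (hasDerivAt_laguerreArg (cos_add_sub_one_pos hm _).ne').deriv
  have hquarter : π / n < 4 * π / n :=
    div_lt_div_of_pos_right (by linarith [pi_pos]) (by positivity)
  refine ⟨laguerreArg_zero n, fun θ hθ hθn => ⟨hderiv θ, ?_⟩,
    fun θ hθ hθn => laguerreArg_pos hm hθ (hθn.trans hquarter.le)⟩
  rw [hderiv θ]
  exact laguerreArgDeriv_pos hm hθ (hθn.trans_lt hquarter)
end

section
/- Let n ≥ 5 and let s₀ be the minimum over θ of the smallest positive root r_D(θ) of f_n(·, θ). If 0 < |z| < s₀ then |L_p(z)| > 1/s₀, and if |z| > 1/s₀ then 0 < |L_p(z)| < s₀. That is, L_p maps the punctured disk D_{s₀} into the exterior region E_{s₀} and vice versa. -/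
open Complex Real Filter

/-!
Write `r = |z|`, `θ = arg z`, `w = √(z^n)` and `ρ = |w| = r^{n/2}`. The principal square root
has `Re w ≥ 0` and `w = ±ρ e^{inθ/2}`, so `Re w = ρ |cos (nθ/2)|`. Since
`L_p(z) = z (1 + (n-1) w) / (w (w + n - 1))`, expanding the squared moduli gives
`r⁴ f_n(r, θ) = ρ² |w + n - 1|² - r⁴ |1 + (n-1) w|²`, so `|L_p(z)| > 1/r` exactly when
`f_n(r, θ) < 0`. As `f_n(0, θ) = -1`, continuity and uniqueness of the root put `f_n(·, θ) < 0`
on `[0, r_D(θ))`, which handles the disk. The exterior follows from the inversion symmetry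
`f_n(1/r, θ) ρ⁴ = -f_n(r, θ) r⁴`.
-/

lemma continuous_fchar {n : ℕ} (hn : 4 ≤ n) (θ : ℝ) : Continuous (fun r => fchar n r θ) := by
  have hn' : (4 : ℝ) ≤ n := by exact_mod_cast hn
  have hrpow : ∀ q : ℝ, 0 ≤ q → Continuous (fun r : ℝ => r ^ q) :=
    fun q hq => Real.continuous_rpow_const hq
  unfold fchar
  have := hrpow (2 * (n : ℝ) - 4) (by linarith)
  have := hrpow ((n : ℝ) / 2) (by positivity)
  have := hrpow ((n : ℝ) - 4) (by linarith)
  have := hrpow (n : ℝ) (by positivity)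
  fun_prop

lemma fchar_zero {n : ℕ} (hn : 4 < n) (θ : ℝ) : fchar n 0 θ = -1 := by
  have hn' : (4 : ℝ) < n := by exact_mod_cast hn
  simp [fchar, Real.zero_rpow, show 2 * (n : ℝ) - 4 ≠ 0 by linarith,
    show (n : ℝ) - 4 ≠ 0 by linarith, show n ≠ 0 by omega]

lemma fchar_neg_of_lt_root {n : ℕ} (hn : 4 < n) {θ R r : ℝ} (hR : R < 1)
    (huniq : ∀ t : ℝ, 0 < t → t < 1 → fchar n t θ = 0 → t = R) (hr : 0 ≤ r) (hrR : r < R) :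
    fchar n r θ < 0 := by
  by_contra! h
  have hsign : (0 : ℝ) ∈ Set.Icc (fchar n 0 θ) (fchar n r θ) := by
    rw [fchar_zero hn]; exact ⟨by norm_num, h⟩
  obtain ⟨t, ⟨ht0, htr⟩, hft⟩ :=
    intermediate_value_Icc hr (continuous_fchar hn.le θ).continuousOn hsign
  have htpos : 0 < t := ht0.lt_of_ne (by rintro rfl; simp [fchar_zero hn] at hft)
  linarith [huniq t htpos (by linarith) hft]

/-- `f_n(r, θ) r⁴` in the variables `c = |cos (nθ/2)|`, `ρ = r^{n/2}` and `s = r⁴`. -/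
def fcharPoly (n : ℕ) (c ρ s : ℝ) : ℝ :=
  ρ ^ 4 + 2 * ((n : ℝ) - 1) * c * ρ * (ρ ^ 2 - s) - ((n : ℝ) - 1) ^ 2 * ρ ^ 2 * s
    + ((n : ℝ) - 1) ^ 2 * ρ ^ 2 - s

lemma fchar_mul_pow_four (n : ℕ) (θ : ℝ) {r : ℝ} (hr : 0 < r) :
    fchar n r θ * r ^ 4 = fcharPoly n |Real.cos (n * θ / 2)| (r ^ ((n : ℝ) / 2)) (r ^ 4) := by
  have hmul : ∀ (x : ℝ) (k : ℕ), r ^ x * r ^ k = r ^ (x + k) := fun x k => by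
    rw [Real.rpow_add hr, Real.rpow_natCast]
  have hpow : ∀ k : ℕ, (r ^ ((n : ℝ) / 2)) ^ k = r ^ ((n : ℝ) / 2 * k) := fun k =>
    (Real.rpow_mul_natCast hr.le _ k).symm
  have h4 : r ^ (2 * (n : ℝ) - 4) * r ^ 4 = (r ^ ((n : ℝ) / 2)) ^ 4 := by
    rw [hmul, hpow]; congr 1; push_cast; ring
  have h2 : r ^ ((n : ℝ) - 4) * r ^ 4 = (r ^ ((n : ℝ) / 2)) ^ 2 := by
    rw [hmul, hpow]; congr 1; push_cast; ring
  have h0 : r ^ (n : ℝ) = (r ^ ((n : ℝ) / 2)) ^ 2 := by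
    rw [hpow]; congr 1; push_cast; ring
  unfold fchar fcharPoly
  linear_combination h4 + (2 * ((n : ℝ) - 1) * |Real.cos (n * θ / 2)| * r ^ ((n : ℝ) / 2)
    + ((n : ℝ) - 1) ^ 2) * h2 - ((n : ℝ) - 1) ^ 2 * r ^ 4 * h0

lemma fcharPoly_inv (n : ℕ) (c : ℝ) {ρ s : ℝ} (hρ : ρ ≠ 0) (hs : s ≠ 0) :
    fcharPoly n c ρ⁻¹ s⁻¹ * (ρ ^ 4 * s) = -fcharPoly n c ρ s := by
  unfold fcharPoly
  field_simp
  ring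

lemma fchar_inv_mul (n : ℕ) (θ : ℝ) {r : ℝ} (hr : 0 < r) :
    fchar n r⁻¹ θ * (r ^ ((n : ℝ) / 2)) ^ 4 = -(fchar n r θ * r ^ 4) := by
  have hρ : 0 < r ^ ((n : ℝ) / 2) := by positivity
  have h := fchar_mul_pow_four n θ (inv_pos.2 hr)
  rw [Real.inv_rpow hr.le, inv_pow] at h
  rw [fchar_mul_pow_four n θ hr, ← fcharPoly_inv n _ hρ.ne' (by positivity), ← h]
  field_simp

lemma fchar_pos_of_fchar_inv_neg (n : ℕ) {θ r : ℝ} (hr : 0 < r) (h : fchar n r⁻¹ θ < 0) :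
    0 < fchar n r θ := by
  have hρ : 0 < (r ^ ((n : ℝ) / 2)) ^ 4 := by positivity
  have key := fchar_inv_mul n θ hr
  nlinarith [mul_neg_of_neg_of_pos h hρ, pow_pos hr 4]

noncomputable def sqrtPow (n : ℕ) (z : ℂ) : ℂ := (z ^ n) ^ ((1 : ℂ) / 2)

lemma sqrtPow_sq (n : ℕ) (z : ℂ) : sqrtPow n z ^ 2 = z ^ n := by
  rw [sqrtPow, one_div]
  exact_mod_cast cpow_nat_inv_pow (z ^ n) two_ne_zero

lemma re_sqrtPow_nonneg (n : ℕ) (z : ℂ) : 0 ≤ (sqrtPow n z).re := by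
  rw [sqrtPow, one_div, cpow_inv_two_re]
  exact Real.sqrt_nonneg _

lemma norm_sqrtPow_and_re (n : ℕ) (z : ℂ) :
    ‖sqrtPow n z‖ = ‖z‖ ^ ((n : ℝ) / 2) ∧
      (sqrtPow n z).re = ‖z‖ ^ ((n : ℝ) / 2) * |Real.cos (n * arg z / 2)| := by
  set ρ := ‖z‖ ^ ((n : ℝ) / 2)
  have hρ : 0 ≤ ρ := by positivity
  set v : ℂ := ρ * exp ((n * arg z / 2 : ℝ) * I)
  have hρ2 : ρ ^ 2 = ‖z‖ ^ n := by
    rw [← Real.rpow_mul_natCast (norm_nonneg _), ← Real.rpow_natCast]; congr 1; push_cast; ring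
  have hv : v ^ 2 = z ^ n := by
    conv_rhs => rw [← norm_mul_exp_arg_mul_I z]
    rw [mul_pow, mul_pow, ← Complex.exp_nat_mul, ← Complex.exp_nat_mul, ← ofReal_pow, hρ2]
    push_cast
    ring_nf
  have hvn : ‖v‖ = ρ := by
    rw [norm_mul, norm_exp_ofReal_mul_I, Complex.norm_real, Real.norm_eq_abs, abs_of_nonneg hρ,
      mul_one]
  have hvre : v.re = ρ * Real.cos (n * arg z / 2) := by rw [re_ofReal_mul, exp_ofReal_mul_I_re]
  obtain ⟨hwn, hwre⟩ : ‖sqrtPow n z‖ = ‖v‖ ∧ |(sqrtPow n z).re| = |v.re| := by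
    rcases sq_eq_sq_iff_eq_or_eq_neg.1 ((sqrtPow_sq n z).trans hv.symm) with h | h <;> simp [h]
  refine ⟨hwn.trans hvn, ?_⟩
  rw [← abs_of_nonneg (re_sqrtPow_nonneg n z), hwre, hvre, abs_mul, abs_of_nonneg hρ]

lemma fcharPoly_eq_sub (n : ℕ) {w : ℂ} {c : ℝ} (hre : w.re = ‖w‖ * c) (s : ℝ) :
    fcharPoly n c ‖w‖ s = ‖w‖ ^ 2 * ‖w + (n - 1)‖ ^ 2 - s * ‖1 + (n - 1) * w‖ ^ 2 := by
  have hsq : ∀ u : ℂ, ‖u‖ ^ 2 = u.re ^ 2 + u.im ^ 2 := fun u => by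
    rw [Complex.sq_norm, normSq_apply]; ring
  rw [hsq (w + _), hsq (1 + _)]
  simp only [add_re, add_im, mul_re, mul_im, sub_re, sub_im,
    one_re, one_im, natCast_re, natCast_im]
  unfold fcharPoly
  have hnorm := hsq w
  rw [hre] at hnorm ⊢
  linear_combination (‖w‖ ^ 2 - ((n : ℝ) - 1) ^ 2 * s) * hnorm

lemma fchar_mul_pow_four_eq_sub (n : ℕ) {z : ℂ} (hz : z ≠ 0) :
    fchar n ‖z‖ (arg z) * ‖z‖ ^ 4 = ‖sqrtPow n z‖ ^ 2 * ‖sqrtPow n z + (n - 1)‖ ^ 2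
      - ‖z‖ ^ 4 * ‖1 + (n - 1) * sqrtPow n z‖ ^ 2 := by
  obtain ⟨hnorm, hre⟩ := norm_sqrtPow_and_re n z
  rw [fchar_mul_pow_four n _ (norm_pos_iff.2 hz), ← hnorm, fcharPoly_eq_sub n (by rw [hre, hnorm])]

lemma add_natCast_sub_one_ne_zero {u : ℂ} (hu : 0 ≤ u.re) {n : ℕ} (hn : 2 ≤ n) :
    u + ((n : ℂ) - 1) ≠ 0 := by
  have : (2 : ℝ) ≤ n := by exact_mod_cast hn
  intro h
  have := congrArg re h
  simp only [add_re, sub_re, natCast_re, one_re, zero_re] at this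
  linarith

lemma sqrtPow_ne_zero (n : ℕ) {z : ℂ} (hz : z ≠ 0) : sqrtPow n z ≠ 0 := fun h =>
  pow_ne_zero n hz (by rw [← sqrtPow_sq, h, zero_pow two_ne_zero])

lemma Lp_ne_zero {n : ℕ} (hn : 2 ≤ n) {z : ℂ} (hz : z ≠ 0) : Lp n z ≠ 0 := by
  have hw := re_sqrtPow_nonneg n z
  refine div_ne_zero (mul_ne_zero hz (add_natCast_sub_one_ne_zero ?_ hn))
    (add_natCast_sub_one_ne_zero hw hn)
  rw [inv_re]
  exact div_nonneg hw (normSq_nonneg _)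

lemma norm_Lp (n : ℕ) {z : ℂ} (hz : z ≠ 0) :
    ‖Lp n z‖ = ‖z‖ * ‖1 + (n - 1) * sqrtPow n z‖ / (‖sqrtPow n z‖ * ‖sqrtPow n z + (n - 1)‖) := by
  have hw := sqrtPow_ne_zero n hz
  have hinv : (sqrtPow n z)⁻¹ + (n - 1) = (1 + (n - 1) * sqrtPow n z) / sqrtPow n z := by
    field_simp
  rw [show Lp n z = z * ((sqrtPow n z)⁻¹ + (n - 1)) / (sqrtPow n z + (n - 1)) from rfl, hinv]
  simp only [norm_div, norm_mul]
  ring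

lemma norm_sqrtPow_mul_norm_add_pos {n : ℕ} (hn : 2 ≤ n) {z : ℂ} (hz : z ≠ 0) :
    0 < ‖sqrtPow n z‖ * ‖sqrtPow n z + (n - 1)‖ :=
  mul_pos (norm_pos_iff.2 (sqrtPow_ne_zero n hz))
    (norm_pos_iff.2 (add_natCast_sub_one_ne_zero (re_sqrtPow_nonneg n z) hn))

lemma one_div_lt_norm_Lp_iff {n : ℕ} (hn : 2 ≤ n) {z : ℂ} (hz : z ≠ 0) :
    1 / ‖z‖ < ‖Lp n z‖ ↔ fchar n ‖z‖ (arg z) < 0 := by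
  have hr : 0 < ‖z‖ := norm_pos_iff.2 hz
  have hden := norm_sqrtPow_mul_norm_add_pos hn hz
  rw [norm_Lp n hz, div_lt_div_iff₀ hr hden, one_mul,
    ← pow_lt_pow_iff_left₀ hden.le (by positivity) two_ne_zero,
    ← neg_pos, ← mul_pos_iff_of_pos_right (pow_pos hr 4), neg_mul, fchar_mul_pow_four_eq_sub n hz,
    neg_sub, sub_pos]
  constructor <;> intro h <;> linarith

lemma norm_Lp_lt_one_div_iff {n : ℕ} (hn : 2 ≤ n) {z : ℂ} (hz : z ≠ 0) :
    ‖Lp n z‖ < 1 / ‖z‖ ↔ 0 < fchar n ‖z‖ (arg z) := by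
  have hr : 0 < ‖z‖ := norm_pos_iff.2 hz
  have hden := norm_sqrtPow_mul_norm_add_pos hn hz
  rw [norm_Lp n hz, div_lt_div_iff₀ hden hr, one_mul,
    ← pow_lt_pow_iff_left₀ (by positivity) hden.le two_ne_zero,
    ← mul_pos_iff_of_pos_right (pow_pos hr 4), fchar_mul_pow_four_eq_sub n hz, sub_pos]
  constructor <;> intro h <;> linarith

theorem stmt15 (n : ℕ) (hn : 5 ≤ n) (rD : ℝ → ℝ)
    (hrD : ∀ θ : ℝ, 0 < rD θ ∧ rD θ < 1 ∧ fchar n (rD θ) θ = 0 ∧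
      ∀ r : ℝ, 0 < r → r < 1 → fchar n r θ = 0 → r = rD θ)
    (s₀ : ℝ) (hs₀ : IsLeast (Set.range rD) s₀) (z : ℂ) (hz : z ≠ 0) :
    (‖z‖ < s₀ → 1 / s₀ < ‖Lp n z‖) ∧
    (1 / s₀ < ‖z‖ → 0 < ‖Lp n z‖ ∧ ‖Lp n z‖ < s₀) := by
  obtain ⟨⟨θ₀, hθ₀⟩, hmin⟩ := hs₀
  have hs₀pos : 0 < s₀ := hθ₀ ▸ (hrD θ₀).1
  have hr : 0 < ‖z‖ := norm_pos_iff.2 hz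
  obtain ⟨-, hR1, -, huniq⟩ := hrD (arg z)
  have hneg : ∀ r, 0 ≤ r → r < s₀ → fchar n r (arg z) < 0 := fun r hr0 hrs =>
    fchar_neg_of_lt_root hn hR1 huniq hr0 (hrs.trans_le (hmin ⟨arg z, rfl⟩))
  refine ⟨fun h => ?_, fun h => ⟨norm_pos_iff.2 (Lp_ne_zero (by omega) hz), ?_⟩⟩
  · calc 1 / s₀ < 1 / ‖z‖ := one_div_lt_one_div_of_lt hr h
      _ < ‖Lp n z‖ := (one_div_lt_norm_Lp_iff (by omega) hz).2 (hneg _ hr.le h)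
  · have hinv : ‖z‖⁻¹ < s₀ := by rwa [inv_lt_comm₀ hr hs₀pos, ← one_div]
    have hpos := fchar_pos_of_fchar_inv_neg n hr (hneg _ (inv_nonneg.2 hr.le) hinv)
    calc ‖Lp n z‖ < 1 / ‖z‖ := (norm_Lp_lt_one_div_iff (by omega) hz).2 hpos
      _ < s₀ := by rwa [one_div]
end

section
/- Let n ≥ 5 and s₀ as above. For every z with 0 < |z| < s₀, the even iterates L_p^{2k}(z) converge to 0 and the odd iterates L_p^{2k+1}(z) tend to ∞ (i.e., |L_p^{2k+1}(z)| → ∞); hence D_{s₀} ∪ E_{s₀} lies in the basin of attraction of the two-cycle {0, ∞}. -/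
open Complex Real Filter

open Topology

/-! The even iterates of a point of `D_s` stay in `D_s`, and their moduli `a_k` decrease, because
`a_{k+1} < 1 / ‖T y_k‖ < a_k` for `y_k = T^[2k] x`. If the limit `A` of the `a_k` were positive,
a limit point `w` of the even orbit would satisfy `‖w‖ = A` and, by continuity of `‖T ·‖`,
`‖T w‖ = 1 / A = 1 / ‖w‖`, against the strict inequality on `D_s`. The odd iterates then blow up
since `‖T y_k‖ > 1 / a_k`.

For the Laguerre map, `‖L_p z‖` is continuous on `z ≠ 0` in spite of the branch cut of the
principal square root `u = √(z^n)`: it depends on `u` only through `‖u‖ = ‖z‖^(n/2)` and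
`Re u = √((‖z^n‖ + Re z^n) / 2)`. -/

lemma normSq_inv_add_ofReal (c : ℝ) {u : ℂ} (hu : u ≠ 0) :
    normSq (u⁻¹ + c) = (1 + 2 * c * u.re + c ^ 2 * normSq u) / normSq u := by
  have hu' : normSq u ≠ 0 := normSq_eq_zero.not.mpr hu
  rw [normSq_add, normSq_inv, normSq_ofReal]
  simp only [conj_ofReal, mul_re, ofReal_re, ofReal_im, mul_zero, sub_zero, inv_re]
  field_simp
  ring

lemma normSq_add_ofReal (c : ℝ) (u : ℂ) :
    normSq (u + c) = normSq u + 2 * c * u.re + c ^ 2 := by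
  rw [normSq_add, normSq_ofReal]
  simp only [conj_ofReal, mul_re, ofReal_re, ofReal_im, mul_zero, sub_zero]
  ring

lemma norm_inv_add_ofReal_div_norm_add_ofReal (c : ℝ) {u : ℂ} (hu : u ≠ 0) :
    ‖u⁻¹ + c‖ / ‖u + c‖ =
      √((1 + 2 * c * u.re + c ^ 2 * normSq u) /
        (normSq u * (normSq u + 2 * c * u.re + c ^ 2))) := by
  rw [norm_def, norm_def, ← Real.sqrt_div' _ (normSq_nonneg _), normSq_inv_add_ofReal c hu,
    normSq_add_ofReal, div_div]

lemma norm_Lp_eq (n : ℕ) {z : ℂ} (hz : z ≠ 0) :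
    ‖Lp n z‖ = ‖z‖ * √((1 + 2 * ((n : ℝ) - 1) * √((‖z‖ ^ n + (z ^ n).re) / 2)
        + ((n : ℝ) - 1) ^ 2 * ‖z‖ ^ n) /
      (‖z‖ ^ n * (‖z‖ ^ n + 2 * ((n : ℝ) - 1) * √((‖z‖ ^ n + (z ^ n).re) / 2)
        + ((n : ℝ) - 1) ^ 2))) := by
  set u := (z ^ n) ^ (2⁻¹ : ℂ)
  have hu : u ≠ 0 := by simp [u, hz]
  have hnormSq : normSq u = ‖z‖ ^ n := by
    rw [← Complex.sq_norm, ← norm_pow, cpow_ofNat_inv_pow, norm_pow]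
  have hc : ((n : ℂ) - 1) = (((n : ℝ) - 1 : ℝ) : ℂ) := by push_cast; rfl
  rw [Lp, one_div, norm_div, norm_mul, mul_div_assoc, hc,
    norm_inv_add_ofReal_div_norm_add_ofReal _ hu, hnormSq, cpow_inv_two_re, norm_pow]

lemma continuousAt_norm_Lp {n : ℕ} (hn : 1 ≤ n) {z : ℂ} (hz : z ≠ 0) :
    ContinuousAt (fun y => ‖Lp n y‖) z := by
  have hc : (0 : ℝ) ≤ (n : ℝ) - 1 := by
    rw [sub_nonneg]; exact_mod_cast hn
  refine ContinuousAt.congr ?_ ((eventually_ne_nhds hz).mono fun y hy => (norm_Lp_eq n hy).symm)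
  refine continuous_norm.continuousAt.mul
    (ContinuousAt.sqrt (ContinuousAt.div (by fun_prop) (by fun_prop) ?_))
  positivity

lemma antitone_of_inv_lt_of_lt_inv {a b : ℕ → ℝ} (ha : ∀ k, 0 < a k)
    (hab : ∀ k, (a k)⁻¹ < b k) (hba : ∀ k, b k < (a (k + 1))⁻¹) : Antitone a :=
  antitone_nat_of_succ_le fun k =>
    ((inv_lt_inv₀ (ha k) (ha (k + 1))).mp ((hab k).trans (hba k))).le

structure SwapsNearZeroAndInfinity {E : Type*} [NormedAddCommGroup E] (T : E → E) (s : ℝ) :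
    Prop where
  inner : ∀ x, x ≠ 0 → ‖x‖ < s → ‖x‖⁻¹ < ‖T x‖ ∧ s⁻¹ < ‖T x‖
  outer : ∀ x, x ≠ 0 → s⁻¹ < ‖x‖ → ‖T x‖ < ‖x‖⁻¹ ∧ 0 < ‖T x‖ ∧ ‖T x‖ < s

namespace SwapsNearZeroAndInfinity

variable {E : Type*} [NormedAddCommGroup E] {T : E → E} {s : ℝ}

lemma mapsTo_iterate_two (hT : SwapsNearZeroAndInfinity T s) :
    Set.MapsTo T^[2] {x | x ≠ 0 ∧ ‖x‖ < s} {x | x ≠ 0 ∧ ‖x‖ < s} := by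
  rintro x ⟨hx, hxs⟩
  have hTx := (hT.inner x hx hxs).2
  have hs : 0 < s := (norm_pos_iff.mpr hx).trans hxs
  have hTx0 : T x ≠ 0 := norm_pos_iff.mp ((inv_pos.mpr hs).trans hTx)
  obtain ⟨-, hpos, hlt⟩ := hT.outer (T x) hTx0 hTx
  exact ⟨norm_pos_iff.mp hpos, hlt⟩

lemma tendsto_iterate_two_nhds_zero [ProperSpace E] (hT : SwapsNearZeroAndInfinity T s)
    (hcont : ∀ x, x ≠ 0 → ‖x‖ < s → ContinuousAt (fun y => ‖T y‖) x)
    {x : E} (hx : x ≠ 0) (hxs : ‖x‖ < s) :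
    Tendsto (fun k => (T^[2])^[k] x) atTop (𝓝 0) := by
  set a : ℕ → ℝ := fun k => ‖(T^[2])^[k] x‖
  set b : ℕ → ℝ := fun k => ‖T ((T^[2])^[k] x)‖
  have hmem : ∀ k, (T^[2])^[k] x ≠ 0 ∧ a k < s :=
    fun k => hT.mapsTo_iterate_two.iterate k ⟨hx, hxs⟩
  have ha : ∀ k, 0 < a k := fun k => norm_pos_iff.mpr (hmem k).1
  have hab : ∀ k, (a k)⁻¹ < b k := fun k => (hT.inner _ (hmem k).1 (hmem k).2).1
  have hba : ∀ k, b k < (a (k + 1))⁻¹ := by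
    intro k
    have hb : 0 < b k := (inv_pos.mpr (ha k)).trans (hab k)
    have hnext : a (k + 1) = ‖T (T ((T^[2])^[k] x))‖ := by
      simp only [a, Function.iterate_succ_apply']; rfl
    rw [lt_inv_comm₀ hb (ha (k + 1)), hnext]
    exact (hT.outer _ (norm_pos_iff.mp hb) (hT.inner _ (hmem k).1 (hmem k).2).2).1
  have hanti := antitone_of_inv_lt_of_lt_inv ha hab hba
  have hbdd : BddBelow (Set.range a) := ⟨0, Set.forall_mem_range.mpr fun k => (ha k).le⟩
  have haA : Tendsto a atTop (𝓝 (⨅ k, a k)) := tendsto_atTop_ciInf hanti hbdd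
  suffices hA : ⨅ k, a k = 0 by
    rw [tendsto_zero_iff_norm_tendsto_zero]; rwa [hA] at haA
  by_contra hA
  set A := ⨅ k, a k
  have hApos : 0 < A := (le_ciInf fun k => (ha k).le).lt_of_ne' hA
  have hbA : Tendsto b atTop (𝓝 A⁻¹) :=
    tendsto_of_tendsto_of_tendsto_of_le_of_le (haA.inv₀ hA)
      (((tendsto_add_atTop_iff_nat 1).mpr haA).inv₀ hA) (fun k => (hab k).le) (fun k => (hba k).le)
  obtain ⟨w, -, φ, hφ, hw⟩ := tendsto_subseq_of_bounded (Metric.isBounded_ball (x := (0 : E)))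
    (fun k => mem_ball_zero_iff.mpr (hmem k).2)
  have hwA : ‖w‖ = A := tendsto_nhds_unique hw.norm (haA.comp hφ.tendsto_atTop)
  have hw0 : w ≠ 0 := norm_pos_iff.mp (hwA ▸ hApos)
  have hws : ‖w‖ < s := hwA ▸ (ciInf_le hbdd 0).trans_lt (hmem 0).2
  have hTw : ‖T w‖ = ‖w‖⁻¹ :=
    hwA ▸ tendsto_nhds_unique ((hcont w hw0 hws).tendsto.comp hw) (hbA.comp hφ.tendsto_atTop)
  exact (hT.inner w hw0 hws).1.ne' hTw

lemma tendsto_norm_apply_iterate_two_atTop [ProperSpace E] (hT : SwapsNearZeroAndInfinity T s)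
    (hcont : ∀ x, x ≠ 0 → ‖x‖ < s → ContinuousAt (fun y => ‖T y‖) x)
    {x : E} (hx : x ≠ 0) (hxs : ‖x‖ < s) :
    Tendsto (fun k => ‖T ((T^[2])^[k] x)‖) atTop atTop := by
  have hmem : ∀ k, (T^[2])^[k] x ≠ 0 ∧ ‖(T^[2])^[k] x‖ < s :=
    fun k => hT.mapsTo_iterate_two.iterate k ⟨hx, hxs⟩
  have hnorm : Tendsto (fun k => ‖(T^[2])^[k] x‖) atTop (𝓝[>] 0) :=
    tendsto_nhdsWithin_iff.mpr
      ⟨tendsto_zero_iff_norm_tendsto_zero.mp (hT.tendsto_iterate_two_nhds_zero hcont hx hxs),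
      Eventually.of_forall fun k => norm_pos_iff.mpr (hmem k).1⟩
  exact tendsto_atTop_mono (fun k => (hT.inner _ (hmem k).1 (hmem k).2).1.le)
    (tendsto_inv_nhdsGT_zero.comp hnorm)

lemma tendsto_iterate_of_norm_lt [ProperSpace E] (hT : SwapsNearZeroAndInfinity T s)
    (hcont : ∀ x, x ≠ 0 → ‖x‖ < s → ContinuousAt (fun y => ‖T y‖) x)
    {x : E} (hx : x ≠ 0) (hxs : ‖x‖ < s) :
    Tendsto (fun k => T^[2 * k] x) atTop (𝓝 0) ∧
      Tendsto (fun k => ‖T^[2 * k + 1] x‖) atTop atTop := by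
  simp only [Function.iterate_mul, Function.iterate_succ_apply']
  exact ⟨hT.tendsto_iterate_two_nhds_zero hcont hx hxs,
    hT.tendsto_norm_apply_iterate_two_atTop hcont hx hxs⟩

lemma tendsto_iterate_of_inv_lt_norm [ProperSpace E] (hT : SwapsNearZeroAndInfinity T s)
    (hcont : ∀ x, x ≠ 0 → ‖x‖ < s → ContinuousAt (fun y => ‖T y‖) x)
    {x : E} (hx : x ≠ 0) (hxs : s⁻¹ < ‖x‖) :
    Tendsto (fun k => ‖T^[2 * k] x‖) atTop atTop ∧
      Tendsto (fun k => T^[2 * k + 1] x) atTop (𝓝 0) := by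
  obtain ⟨-, hpos, hlt⟩ := hT.outer x hx hxs
  obtain ⟨h0, hinf⟩ := hT.tendsto_iterate_of_norm_lt hcont (norm_pos_iff.mp hpos) hlt
  refine ⟨(tendsto_add_atTop_iff_nat 1).mp ?_, ?_⟩
  · simpa only [mul_add_one, Function.iterate_succ_apply] using hinf
  · simpa only [Function.iterate_succ_apply] using h0

end SwapsNearZeroAndInfinity

theorem stmt16_general (n : ℕ) (hn : 5 ≤ n) (s₀ : ℝ)
    (hmap : ∀ z : ℂ, z ≠ 0 →
      (‖z‖ < s₀ → 1 / ‖z‖ < ‖Lp n z‖ ∧ 1 / s₀ < ‖Lp n z‖) ∧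
      (1 / s₀ < ‖z‖ → ‖Lp n z‖ < 1 / ‖z‖ ∧
        0 < ‖Lp n z‖ ∧ ‖Lp n z‖ < s₀)) :
    ∀ z : ℂ, z ≠ 0 →
      (‖z‖ < s₀ →
        Filter.Tendsto (fun k : ℕ => (Lp n)^[2 * k] z) Filter.atTop (nhds 0) ∧
        Filter.Tendsto (fun k : ℕ => ‖(Lp n)^[2 * k + 1] z‖) Filter.atTop Filter.atTop) ∧
      (1 / s₀ < ‖z‖ →
        Filter.Tendsto (fun k : ℕ => ‖(Lp n)^[2 * k] z‖) Filter.atTop Filter.atTop ∧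
        Filter.Tendsto (fun k : ℕ => (Lp n)^[2 * k + 1] z) Filter.atTop (nhds 0)) := by
  simp only [one_div] at hmap ⊢
  have hT : SwapsNearZeroAndInfinity (Lp n) s₀ :=
    ⟨fun z hz => (hmap z hz).1, fun z hz => (hmap z hz).2⟩
  have hcont : ∀ z : ℂ, z ≠ 0 → ‖z‖ < s₀ → ContinuousAt (fun y => ‖Lp n y‖) z :=
    fun z hz _ => continuousAt_norm_Lp (by omega) hz
  exact fun z hz =>
    ⟨hT.tendsto_iterate_of_norm_lt hcont hz, hT.tendsto_iterate_of_inv_lt_norm hcont hz⟩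

theorem stmt16 (n : ℕ) (hn : 5 ≤ n) (s₀ : ℝ) (hs₀pos : 0 < s₀) (hs₀lt : s₀ < 1)
    (hmap : ∀ z : ℂ, z ≠ 0 →
      (‖z‖ < s₀ → 1 / ‖z‖ < ‖Lp n z‖ ∧ 1 / s₀ < ‖Lp n z‖) ∧
      (1 / s₀ < ‖z‖ → ‖Lp n z‖ < 1 / ‖z‖ ∧
        0 < ‖Lp n z‖ ∧ ‖Lp n z‖ < s₀)) :
    ∀ z : ℂ, z ≠ 0 →
      (‖z‖ < s₀ →
        Filter.Tendsto (fun k : ℕ => (Lp n)^[2 * k] z) Filter.atTop (nhds 0) ∧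
        Filter.Tendsto (fun k : ℕ => ‖(Lp n)^[2 * k + 1] z‖) Filter.atTop Filter.atTop) ∧
      (1 / s₀ < ‖z‖ →
        Filter.Tendsto (fun k : ℕ => ‖(Lp n)^[2 * k] z‖) Filter.atTop Filter.atTop ∧
        Filter.Tendsto (fun k : ℕ => (Lp n)^[2 * k + 1] z) Filter.atTop (nhds 0)) :=
  stmt16_general n hn s₀ hmap
end

section
/- For n ≥ 5, let r₀ = r_D(0) be the positive zero of f_n(·, 0) that is less than 1. Then for each k the pair {r₀ e^{2kπi/n}, (1/r₀) e^{2kπi/n}} is a two-cycle of the Laguerre iteration function: L_p(r₀ e^{2kπi/n}) = (1/r₀) e^{2kπi/n} and L_p((1/r₀) e^{2kπi/n}) = r₀ e^{2kπi/n}. -/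
open Complex Real Filter

/-!
On a ray `r ω` through an `n`-th root of unity `ω`, the principal root `√((rω)ⁿ)` is the real
number `s = r^(n/2)`, so `L_p` maps the ray to itself: `L_p(rω) = ρ(r) ω` with
`ρ(r) = r (1/s + n - 1) / (s + n - 1)`. Replacing `r` by `1/r` replaces `s` by `1/s`, and this
gives `ρ(1/r) = 1/ρ(r)`. Finally `r⁴ f_n(r, 0) = (s(s + n - 1))² - (r²(1 + (n - 1)s))²`, so a
positive zero of `f_n(·, 0)` satisfies `ρ(r) = 1/r`, and then `ρ(1/r) = r`.
-/

/-- The radial part `ρ` of `Lp n` on the rays through the `n`-th roots of unity. -/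
noncomputable def laguerreRadius (n : ℕ) (r : ℝ) : ℝ :=
  r * ((r ^ ((n : ℝ) / 2))⁻¹ + ((n : ℝ) - 1)) / (r ^ ((n : ℝ) / 2) + ((n : ℝ) - 1))

lemma laguerreRadius_inv (n : ℕ) {r : ℝ} (hr : 0 ≤ r) :
    laguerreRadius n r⁻¹ = (laguerreRadius n r)⁻¹ := by
  simp only [laguerreRadius, Real.inv_rpow hr, div_eq_mul_inv, mul_inv, inv_inv]
  ring

lemma pow_cpow_half_of_pow_eq_one {n : ℕ} {ω : ℂ} (hω : ω ^ n = 1) {r : ℝ} (hr : 0 ≤ r) :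
    (((r : ℂ) * ω) ^ n) ^ ((1 : ℂ) / 2) = ((r ^ ((n : ℝ) / 2) : ℝ) : ℂ) := by
  rw [mul_pow, hω, mul_one, ← ofReal_pow, show (1 : ℂ) / 2 = ((1 / 2 : ℝ) : ℂ) by norm_num,
    ← ofReal_cpow (by positivity), ← Real.rpow_natCast, ← Real.rpow_mul hr]
  ring_nf

lemma Lp_ofReal_mul_of_pow_eq_one {n : ℕ} {ω : ℂ} (hω : ω ^ n = 1) {r : ℝ} (hr : 0 ≤ r) :
    Lp n ((r : ℂ) * ω) = (laguerreRadius n r : ℂ) * ω := by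
  rw [Lp, pow_cpow_half_of_pow_eq_one hω hr, laguerreRadius]
  push_cast
  ring

lemma exp_two_pi_int_mul_I_div_pow (n : ℕ) (hn : n ≠ 0) (k : ℤ) :
    Complex.exp (2 * k * Real.pi * Complex.I / n) ^ n = 1 := by
  rw [← Complex.exp_nat_mul, ← Complex.exp_int_mul_two_pi_mul_I k]
  congr 1
  field_simp

lemma rpow_four_mul_fchar_zero (n : ℕ) {r : ℝ} (hr : 0 < r) :
    r ^ 4 * fchar n r 0 =
      (r ^ ((n : ℝ) / 2) * (r ^ ((n : ℝ) / 2) + ((n : ℝ) - 1))) ^ 2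
        - (r ^ 2 * (1 + ((n : ℝ) - 1) * r ^ ((n : ℝ) / 2))) ^ 2 := by
  have hpow : ∀ a : ℝ, r ^ (a - 4) * r ^ 4 = r ^ a := fun a => by
    rw [← Real.rpow_natCast, ← Real.rpow_add hr]
    norm_num
  have hsq : r ^ (n : ℝ) = (r ^ ((n : ℝ) / 2)) ^ 2 := by
    rw [← Real.rpow_natCast, ← Real.rpow_mul hr.le]
    norm_num
  have hsq' : r ^ (2 * (n : ℝ)) = (r ^ ((n : ℝ) / 2)) ^ 4 := by
    rw [← Real.rpow_natCast, ← Real.rpow_mul hr.le]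
    ring_nf
  rw [fchar, mul_zero, zero_div, Real.cos_zero, abs_one]
  linear_combination (2 * ((n : ℝ) - 1) * r ^ ((n : ℝ) / 2) + ((n : ℝ) - 1) ^ 2) *
      hpow (n : ℝ) + hpow (2 * (n : ℝ)) + hsq'
    + (((n : ℝ) - 1) ^ 2 * (1 - r ^ 4) + 2 * ((n : ℝ) - 1) * r ^ ((n : ℝ) / 2)) * hsq

lemma laguerreRadius_eq_inv_of_fchar_zero {n : ℕ} (hn : 1 ≤ n) {r : ℝ} (hr : 0 < r)
    (hf : fchar n r 0 = 0) : laguerreRadius n r = r⁻¹ := by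
  set s := r ^ ((n : ℝ) / 2)
  set c := (n : ℝ) - 1
  have hc : 0 ≤ c := by simp [c, hn]
  have hfac : (s * (s + c) - r ^ 2 * (1 + c * s)) * (s * (s + c) + r ^ 2 * (1 + c * s)) = 0 := by
    linear_combination -(rpow_four_mul_fchar_zero n hr) + r ^ 4 * hf
  have hroot : s * (s + c) = r ^ 2 * (1 + c * s) := by
    refine sub_eq_zero.mp ((mul_eq_zero.mp hfac).resolve_right ?_)
    positivity
  rw [laguerreRadius, div_eq_iff (by positivity)]
  field_simp
  linear_combination -hroot

theorem stmt17 (n : ℕ) (hn : 5 ≤ n) (r₀ : ℝ)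
    (hr₀ : 0 < r₀ ∧ r₀ < 1 ∧ fchar n r₀ 0 = 0 ∧
      ∀ r : ℝ, 0 < r → r < 1 → fchar n r 0 = 0 → r = r₀) (k : ℤ) :
    Lp n ((r₀ : ℂ) * Complex.exp (2 * k * Real.pi * Complex.I / n))
        = (1 / (r₀ : ℂ)) * Complex.exp (2 * k * Real.pi * Complex.I / n) ∧
    Lp n ((1 / (r₀ : ℂ)) * Complex.exp (2 * k * Real.pi * Complex.I / n))
        = (r₀ : ℂ) * Complex.exp (2 * k * Real.pi * Complex.I / n) := by
  obtain ⟨hr, -, hf, -⟩ := hr₀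
  have hω := exp_two_pi_int_mul_I_div_pow n (by omega) k
  have hρ : laguerreRadius n r₀ = r₀⁻¹ := laguerreRadius_eq_inv_of_fchar_zero (by omega) hr hf
  have hρ' : laguerreRadius n r₀⁻¹ = r₀ := by rw [laguerreRadius_inv n hr.le, hρ, inv_inv]
  rw [one_div, ← ofReal_inv, Lp_ofReal_mul_of_pow_eq_one hω hr.le,
    Lp_ofReal_mul_of_pow_eq_one hω (inv_nonneg.mpr hr.le), hρ, hρ']
  exact ⟨rfl, rfl⟩
end

section
/- Let n ≥ 5 and r₀ = r_D(0) as above. For every real r with 0 < r < r₀ or r > 1/r₀, the Laguerre iterates of r (a positive real) converge to the two-cycle {0, ∞}: L_p^{2k}(r) → 0 (or → ∞) and L_p^{2k+1}(r) → ∞ (or → 0) as k → ∞. -/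
/-!
On the positive axis `Lp n` is the real map `g = laguerreReal n`, which commutes with `t ↦ t⁻¹`.
For `t > 0` the sign of `t * g t - 1` is that of `-fchar n t 0` (multiplied by `t ^ 4`, the latter
is a difference of two squares), and `fchar n · 0` is continuous with value `-1` at `0` (this is
where `n ≥ 5` enters), so it is negative on `(0, r₀)`. Hence `H t = (g t)⁻¹` maps `(0, r₀)` into
itself with `H t < t`, and its iterates decrease to a fixed point of `H`, which can only be `0`.
As `g` commutes with inversion, `g^[2k] = H^[2k]`, `g^[2k+1] = (H^[2k+1])⁻¹`, and for `r > 1 / r₀`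
one passes to `r⁻¹` through `g^[m] r = (g^[m] r⁻¹)⁻¹`.
-/

open Complex Real Filter

open Set Topology

noncomputable def laguerreReal (n : ℕ) (t : ℝ) : ℝ :=
  t * ((√(t ^ n))⁻¹ + ((n : ℝ) - 1)) / (√(t ^ n) + ((n : ℝ) - 1))

theorem tendsto_iterate_nhdsGT_zero {H : ℝ → ℝ} {c r : ℝ} (hH : ∀ t ∈ Ioo 0 c, H t ∈ Ioo 0 t)
    (hcont : ∀ t ∈ Ioo 0 c, ContinuousAt H t) (hr : r ∈ Ioo 0 c) :
    Tendsto (fun k ↦ H^[k] r) atTop (𝓝[>] 0) := by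
  have hmem : ∀ k, H^[k] r ∈ Ioc 0 r := by
    intro k
    induction k with
    | zero => exact ⟨hr.1, le_rfl⟩
    | succ k ih =>
      rw [Function.iterate_succ_apply']
      have := hH _ ⟨ih.1, ih.2.trans_lt hr.2⟩
      exact ⟨this.1, this.2.le.trans ih.2⟩
  have hanti : Antitone fun k ↦ H^[k] r := antitone_nat_of_succ_le fun k ↦ by
    rw [Function.iterate_succ_apply']
    exact (hH _ ⟨(hmem k).1, (hmem k).2.trans_lt hr.2⟩).2.le
  have hL := tendsto_atTop_ciInf hanti ⟨0, by rintro _ ⟨k, rfl⟩; exact (hmem k).1.le⟩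
  have hL0 : ⨅ k, H^[k] r = 0 := by
    by_contra hne
    have hLpos := lt_of_le_of_ne (ge_of_tendsto' hL fun k ↦ (hmem k).1.le) (Ne.symm hne)
    have hLc : ⨅ k, H^[k] r ∈ Ioo 0 c :=
      ⟨hLpos, (le_of_tendsto' hL fun k ↦ (hmem k).2).trans_lt hr.2⟩
    exact (hH _ hLc).2.ne (isFixedPt_of_tendsto_iterate hL (hcont _ hLc))
  rw [hL0] at hL
  exact tendsto_nhdsWithin_iff.2 ⟨hL, Eventually.of_forall fun k ↦ (hmem k).1⟩

section LaguerreReal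

variable {n : ℕ} {t : ℝ}

theorem laguerreReal_inv (n : ℕ) (t : ℝ) : laguerreReal n t⁻¹ = (laguerreReal n t)⁻¹ := by
  simp only [laguerreReal, inv_pow, Real.sqrt_inv, inv_inv, div_eq_mul_inv, mul_inv]
  ring

theorem laguerreReal_pos (hn : 1 ≤ n) (ht : 0 < t) : 0 < laguerreReal n t := by
  have hm : (0 : ℝ) ≤ n - 1 := by rw [sub_nonneg]; exact_mod_cast hn
  have hA : 0 < √(t ^ n) := by positivity
  unfold laguerreReal
  positivity

theorem continuousAt_laguerreReal (hn : 1 ≤ n) (ht : 0 < t) : ContinuousAt (laguerreReal n) t := by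
  have hm : (0 : ℝ) ≤ n - 1 := by rw [sub_nonneg]; exact_mod_cast hn
  have hA : 0 < √(t ^ n) := by positivity
  unfold laguerreReal
  fun_prop (disch := positivity)

theorem fchar_zero_mul_pow_four (ht : 0 < t) :
    fchar n t 0 * t ^ 4 = (√(t ^ n) * (√(t ^ n) + (n - 1))) ^ 2
      - (t ^ 2 * ((n - 1) * √(t ^ n) + 1)) ^ 2 := by
  have hsq : √(t ^ n) ^ 2 = t ^ n := Real.sq_sqrt (by positivity)
  have hhalf : t ^ ((n : ℝ) / 2) = √(t ^ n) := by
    rw [Real.sqrt_eq_rpow, ← Real.rpow_natCast, ← Real.rpow_mul ht.le, mul_one_div]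
  have hsub : t ^ ((n : ℝ) - 4) = t ^ n / t ^ 4 := by
    rw [show (4 : ℝ) = (4 : ℕ) by norm_num, Real.rpow_sub_natCast ht.ne', Real.rpow_natCast]
  have hsub2 : t ^ (2 * (n : ℝ) - 4) = (t ^ n) ^ 2 / t ^ 4 := by
    rw [show (4 : ℝ) = (4 : ℕ) by norm_num, Real.rpow_sub_natCast ht.ne', Real.rpow_mul ht.le]
    norm_num [← pow_mul, mul_comm]
  simp only [fchar, mul_zero, zero_div, Real.cos_zero, abs_one, mul_one, hhalf, hsub, hsub2,
    Real.rpow_natCast]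
  generalize √(t ^ n) = A at hsq ⊢
  rw [← hsq]
  field_simp
  ring

theorem one_lt_mul_laguerreReal_iff (hn : 1 ≤ n) (ht : 0 < t) :
    1 < t * laguerreReal n t ↔ fchar n t 0 < 0 := by
  have hm : (0 : ℝ) ≤ n - 1 := by rw [sub_nonneg]; exact_mod_cast hn
  have hA : 0 < √(t ^ n) := by positivity
  have hP : 0 < √(t ^ n) * (√(t ^ n) + (n - 1)) := by positivity
  have hQ : 0 < t ^ 2 * ((n - 1) * √(t ^ n) + 1) := by positivity
  have hmul : t * laguerreReal n t
      = t ^ 2 * ((n - 1) * √(t ^ n) + 1) / (√(t ^ n) * (√(t ^ n) + (n - 1))) := by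
    unfold laguerreReal
    field_simp
    ring
  rw [hmul, one_lt_div hP, ← pow_lt_pow_iff_left₀ hP.le hQ.le two_ne_zero, ← sub_neg,
    ← fchar_zero_mul_pow_four ht]
  exact ⟨fun h ↦ neg_of_mul_neg_left h (by positivity),
    fun h ↦ mul_neg_of_neg_of_pos h (by positivity)⟩

theorem continuous_fchar_zero (hn : 4 ≤ n) : Continuous (fchar n · 0) := by
  have hn' : (4 : ℝ) ≤ n := by exact_mod_cast hn
  unfold fchar
  fun_prop (disch := first | linarith | positivity)

theorem fchar_zero_zero (hn : 5 ≤ n) : fchar n 0 0 = -1 := by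
  have hn' : (5 : ℝ) ≤ n := by exact_mod_cast hn
  simp only [fchar]
  rw [Real.zero_rpow (by linarith), Real.zero_rpow (by linarith), Real.zero_rpow (by linarith),
    Real.zero_rpow (by linarith)]
  ring

theorem fchar_zero_neg_of_forall_ne_zero (hn : 5 ≤ n) (ht : 0 ≤ t)
    (h : ∀ s ∈ Ioc 0 t, fchar n s 0 ≠ 0) : fchar n t 0 < 0 := by
  by_contra! hpos
  obtain ⟨s, hs, hs0⟩ := intermediate_value_Icc ht (continuous_fchar_zero (by omega)).continuousOn
    ⟨(fchar_zero_zero hn).trans_le (by norm_num), hpos⟩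
  have hs_ne : s ≠ 0 := by
    rintro rfl
    norm_num [fchar_zero_zero hn] at hs0
  exact h s ⟨lt_of_le_of_ne hs.1 hs_ne.symm, hs.2⟩ hs0

theorem inv_laguerreReal_mem_Ioo (hn : 5 ≤ n) (ht : 0 < t)
    (h : ∀ s ∈ Ioc 0 t, fchar n s 0 ≠ 0) : (laguerreReal n t)⁻¹ ∈ Ioo 0 t := by
  have hpos := laguerreReal_pos (n := n) (by omega) ht
  have hmul := (one_lt_mul_laguerreReal_iff (by omega) ht).2
    (fchar_zero_neg_of_forall_ne_zero hn ht.le h)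
  exact ⟨inv_pos.2 hpos, (inv_lt_iff_one_lt_mul₀ hpos).2 hmul⟩

theorem Lp_ofReal (ht : 0 ≤ t) : Lp n t = laguerreReal n t := by
  have hsqrt : ((t : ℂ) ^ n) ^ ((1 : ℂ) / 2) = (√(t ^ n) : ℂ) := by
    rw [Real.sqrt_eq_rpow, Complex.ofReal_cpow (by positivity), Complex.ofReal_pow]
    norm_num
  rw [Lp, laguerreReal, hsqrt]
  push_cast
  ring

theorem Lp_iterate_ofReal (hn : 1 ≤ n) (ht : 0 < t) (m : ℕ) :
    (Lp n)^[m] t = ((laguerreReal n)^[m] t : ℂ) := by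
  induction m with
  | zero => rfl
  | succ m ih =>
    have hpos : 0 < (laguerreReal n)^[m] t :=
      (show MapsTo (laguerreReal n) (Ioi 0) (Ioi 0) from fun _ ↦ laguerreReal_pos hn).iterate m ht
    rw [Function.iterate_succ_apply', Function.iterate_succ_apply', ih, Lp_ofReal hpos.le]

theorem tendsto_laguerreReal_iterate (hn : 5 ≤ n) {c r : ℝ}
    (hc : ∀ s ∈ Ioo 0 c, fchar n s 0 ≠ 0) (hr : r ∈ Ioo 0 c) :
    Tendsto (fun k ↦ (laguerreReal n)^[2 * k] r) atTop (𝓝[>] 0) ∧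
      Tendsto (fun k ↦ (laguerreReal n)^[2 * k + 1] r) atTop atTop := by
  set H := Inv.inv ∘ laguerreReal n
  have hH : Tendsto (fun k ↦ H^[k] r) atTop (𝓝[>] 0) := by
    refine tendsto_iterate_nhdsGT_zero (fun t ht ↦ inv_laguerreReal_mem_Ioo hn ht.1
      fun s hs ↦ hc s ⟨hs.1, hs.2.trans_lt ht.2⟩) (fun t ht ↦ ?_) hr
    exact (continuousAt_laguerreReal (by omega) ht.1).inv₀ (laguerreReal_pos (by omega) ht.1).ne'
  have hiter (m : ℕ) : H^[m] = Inv.inv^[m] ∘ (laguerreReal n)^[m] :=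
    (Function.Commute.symm (laguerreReal_inv n)).comp_iterate m
  have heven (k : ℕ) : (laguerreReal n)^[2 * k] r = H^[2 * k] r := by
    rw [hiter, inv_involutive.iterate_two_mul, Function.id_comp]
  have hodd (k : ℕ) : (laguerreReal n)^[2 * k + 1] r = (H^[2 * k + 1] r)⁻¹ := by
    rw [hiter, inv_involutive.iterate_two_mul_add_one, Function.comp_apply, inv_inv]
  have hsub {φ : ℕ → ℕ} (hφ : StrictMono φ) : Tendsto (fun k ↦ H^[φ k] r) atTop (𝓝[>] 0) :=
    hH.comp hφ.tendsto_atTop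
  simp only [heven, hodd]
  exact ⟨hsub fun _ _ h ↦ by omega, tendsto_inv_nhdsGT_zero.comp (hsub fun _ _ h ↦ by omega)⟩

theorem tendsto_laguerreReal_iterate_of_inv_mem (hn : 5 ≤ n) {c r : ℝ}
    (hc : ∀ s ∈ Ioo 0 c, fchar n s 0 ≠ 0) (hr : r⁻¹ ∈ Ioo 0 c) :
    Tendsto (fun k ↦ (laguerreReal n)^[2 * k] r) atTop atTop ∧
      Tendsto (fun k ↦ (laguerreReal n)^[2 * k + 1] r) atTop (𝓝[>] 0) := by
  have hiter (m : ℕ) : (laguerreReal n)^[m] r = ((laguerreReal n)^[m] r⁻¹)⁻¹ := by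
    rw [(Function.Commute.iterate_left (laguerreReal_inv n) m).eq, inv_inv]
  obtain ⟨heven, hodd⟩ := tendsto_laguerreReal_iterate hn hc hr
  simp only [hiter]
  exact ⟨tendsto_inv_nhdsGT_zero.comp heven, tendsto_inv_atTop_nhdsGT_zero.comp hodd⟩

end LaguerreReal

theorem stmt18 (n : ℕ) (hn : 5 ≤ n) (r₀ : ℝ)
    (hr₀ : 0 < r₀ ∧ r₀ < 1 ∧ fchar n r₀ 0 = 0 ∧
      ∀ r : ℝ, 0 < r → r < 1 → fchar n r 0 = 0 → r = r₀)
    (r : ℝ) (hr : 0 < r) :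
    (r < r₀ →
      Filter.Tendsto (fun k : ℕ => (Lp n)^[2 * k] (r : ℂ)) Filter.atTop (nhds 0) ∧
      Filter.Tendsto (fun k : ℕ => ‖(Lp n)^[2 * k + 1] (r : ℂ)‖) Filter.atTop Filter.atTop) ∧
    (1 / r₀ < r →
      Filter.Tendsto (fun k : ℕ => ‖(Lp n)^[2 * k] (r : ℂ)‖) Filter.atTop Filter.atTop ∧
      Filter.Tendsto (fun k : ℕ => (Lp n)^[2 * k + 1] (r : ℂ)) Filter.atTop (nhds 0)) := by
  obtain ⟨hr₀_pos, hr₀_lt_one, -, hr₀_unique⟩ := hr₀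
  have hc : ∀ s ∈ Ioo 0 r₀, fchar n s 0 ≠ 0 := fun s hs hs0 ↦
    hs.2.ne (hr₀_unique s hs.1 (hs.2.trans hr₀_lt_one) hs0)
  have hofReal : Tendsto ((↑) : ℝ → ℂ) (𝓝[>] 0) (𝓝 0) :=
    (Complex.continuous_ofReal.tendsto' 0 0 Complex.ofReal_zero).mono_left nhdsWithin_le_nhds
  simp only [Lp_iterate_ofReal (by omega : 1 ≤ n) hr, Complex.norm_real]
  refine ⟨fun hrr ↦ ?_, fun hrr ↦ ?_⟩
  · obtain ⟨heven, hodd⟩ := tendsto_laguerreReal_iterate hn hc ⟨hr, hrr⟩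
    exact ⟨hofReal.comp heven, tendsto_norm_atTop_atTop.comp hodd⟩
  · have hrinv : r⁻¹ ∈ Ioo 0 r₀ := ⟨inv_pos.2 hr, by rwa [inv_lt_comm₀ hr hr₀_pos, ← one_div]⟩
    obtain ⟨heven, hodd⟩ := tendsto_laguerreReal_iterate_of_inv_mem hn hc hrinv
    exact ⟨tendsto_norm_atTop_atTop.comp heven, hofReal.comp hodd⟩
end
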